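/- arXiv:1204.2185 — 10 statements merged into one kernel-verified Lean document; each statement's English description precedes it below -/
import Mathlib

section
/- Let R be a graded commutative 2-ring and let r : g → h be a morphism of R. Then every translate of r is equal to a morphism of the form u ∘ (id_ℓ ⊗ r) ∘ v for some object ℓ of R and isomorphisms u, v of R, and also to a morphism of the form u' ∘ (r ⊗ id_ℓ') ∘ v' for some object ℓ' and isomorphisms u', v'. Moreover, the relation 'r̃ is a translate of r' is an equivalence relation on the morphisms of R. -/
open CategoryTheory CategoryTheory.Limits CategoryTheory.MonoidalCategory

universe w v u v' u' v'' u''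

/-- A *graded commutative 2-ring*: an essentially small preadditive symmetric monoidal
category whose tensor product is additive in each variable and in which every object
is invertible for the tensor product. -/
class GradedComm2Ring (C : Type u) [Category.{v} C] [Preadditive C] [MonoidalCategory C]
    [SymmetricCategory C] [MonoidalPreadditive C] : Prop where
  essentiallySmall : EssentiallySmall.{v} C
  invertible : ∀ g : C, ∃ g' : C, Nonempty (g ⊗ g' ≅ 𝟙_ C)
section TranslateDef

variable {C : Type u} [Category.{v} C] [MonoidalCategory C]

/-- `Translate r r'` says that `r'` is a *translate* of `r`: it is obtained from `r`
by a finite sequence of the operations of tensoring with an identity morphism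
(on either side) and of composing with an isomorphism (on either side). -/
inductive Translate : ∀ {g h g' h' : C}, (g ⟶ h) → (g' ⟶ h') → Prop
  | refl {g h : C} (r : g ⟶ h) : Translate r r
  | whiskerLeft {g h g' h' : C} {r : g ⟶ h} {r' : g' ⟶ h'} (ℓ : C) :
      Translate r r' → Translate r (ℓ ◁ r')
  | whiskerRight {g h g' h' : C} {r : g ⟶ h} {r' : g' ⟶ h'} (ℓ : C) :
      Translate r r' → Translate r (r' ▷ ℓ)
  | compIsoLeft {g h g' h' h'' : C} {r : g ⟶ h} {r' : g' ⟶ h'} (u : h' ≅ h'') :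
      Translate r r' → Translate r (r' ≫ u.hom)
  | compIsoRight {g h g' h' g'' : C} {r : g ⟶ h} {r' : g' ⟶ h'} (u : g'' ≅ g') :
      Translate r r' → Translate r (u.hom ≫ r')

end TranslateDef


section Aux

variable {C : Type u} [Category.{v} C] [MonoidalCategory C]

lemma Translate.trans' {g h g' h' g'' h'' : C} {r : g ⟶ h} {r' : g' ⟶ h'}
    {r'' : g'' ⟶ h''} (t1 : Translate r r') (t2 : Translate r' r'') :
    Translate r r'' := by
  induction t2 with
  | refl => exact t1
  | whiskerLeft ℓ _ ih => exact Translate.whiskerLeft ℓ (ih t1)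
  | whiskerRight ℓ _ ih => exact Translate.whiskerRight ℓ (ih t1)
  | compIsoLeft u _ ih => exact Translate.compIsoLeft u (ih t1)
  | compIsoRight u _ ih => exact Translate.compIsoRight u (ih t1)

lemma Translate.of_eq {g h g' h' : C} {r : g ⟶ h} {r' s' : g' ⟶ h'}
    (t : Translate r r') (e : r' = s') : Translate r s' := e ▸ t

lemma Translate.conj {g h g' h' : C} {r : g ⟶ h} (ℓ : C)
    (v : g' ≅ ℓ ⊗ g) (u : ℓ ⊗ h ≅ h') :
    Translate r (v.hom ≫ (ℓ ◁ r) ≫ u.hom) :=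
  Translate.compIsoRight v (Translate.compIsoLeft u (Translate.whiskerLeft ℓ (Translate.refl r)))

/-- Whiskering a left twist on the left. -/
lemma leftTwist_whiskerLeft {g h g' h' : C} {r : g ⟶ h} {r' : g' ⟶ h'} {m : C}
    {v : g' ≅ m ⊗ g} {u : m ⊗ h ≅ h'} (hu : r' = v.hom ≫ (m ◁ r) ≫ u.hom) (ℓ : C) :
    ℓ ◁ r' = (whiskerLeftIso ℓ v ≪≫ (α_ ℓ m g).symm).hom ≫ ((ℓ ⊗ m) ◁ r) ≫
      (α_ ℓ m h ≪≫ whiskerLeftIso ℓ u).hom := by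
  subst hu; simp

end Aux

section Aux2

variable {C : Type u} [Category.{v} C] [MonoidalCategory C] [BraidedCategory C]

lemma Translate.leftTwist {g h g' h' : C} {r : g ⟶ h} {r' : g' ⟶ h'}
    (t : Translate r r') :
    ∃ (ℓ : C) (v : g' ≅ ℓ ⊗ g) (u : ℓ ⊗ h ≅ h'), r' = v.hom ≫ (ℓ ◁ r) ≫ u.hom := by
  induction t with
  | refl r => exact ⟨𝟙_ C, (λ_ _).symm, λ_ _, by simp⟩
  | whiskerLeft ℓ _ ih =>
      obtain ⟨m, v, u, hu⟩ := ih
      exact ⟨ℓ ⊗ m, whiskerLeftIso ℓ v ≪≫ (α_ ℓ m _).symm,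
        α_ ℓ m _ ≪≫ whiskerLeftIso ℓ u, leftTwist_whiskerLeft hu ℓ⟩
  | whiskerRight ℓ _ ih =>
      obtain ⟨m, v, u, hu⟩ := ih
      refine ⟨ℓ ⊗ m, β_ _ ℓ ≪≫ (whiskerLeftIso ℓ v ≪≫ (α_ ℓ m _).symm),
        (α_ ℓ m _ ≪≫ whiskerLeftIso ℓ u) ≪≫ (β_ _ ℓ).symm, ?_⟩
      have hb : ∀ {a b : C} (s : a ⟶ b), s ▷ ℓ = (β_ a ℓ).hom ≫ (ℓ ◁ s) ≫ (β_ b ℓ).inv := by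
        intro a b s; simp
      rw [hb, leftTwist_whiskerLeft hu ℓ]
      simp
  | compIsoLeft w _ ih =>
      obtain ⟨m, v, u, hu⟩ := ih
      exact ⟨m, v, u ≪≫ w, by subst hu; simp⟩
  | compIsoRight w _ ih =>
      obtain ⟨m, v, u, hu⟩ := ih
      exact ⟨m, w ≪≫ v, u, by subst hu; simp⟩

lemma Translate.rightTwist {g h g' h' : C} {r : g ⟶ h} {r' : g' ⟶ h'}
    (t : Translate r r') :
    ∃ (ℓ' : C) (v' : g' ≅ g ⊗ ℓ') (u' : h ⊗ ℓ' ≅ h'), r' = v'.hom ≫ (r ▷ ℓ') ≫ u'.hom := by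
  obtain ⟨ℓ, v, u, hu⟩ := t.leftTwist
  refine ⟨ℓ, v ≪≫ β_ ℓ g, (β_ ℓ h).symm ≪≫ u, ?_⟩
  subst hu
  simp [← BraidedCategory.braiding_naturality_right]

end Aux2

section Aux3

variable {C : Type u} [Category.{v} C] [Preadditive C] [MonoidalCategory C]
  [SymmetricCategory C] [MonoidalPreadditive C] [GradedComm2Ring C]

lemma Translate.symm' {g h g' h' : C} {r : g ⟶ h} {r' : g' ⟶ h'}
    (t : Translate r r') : Translate r' r := by
  obtain ⟨ℓ, v, u, hu⟩ := t.leftTwist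
  obtain ⟨ℓ', ⟨e⟩⟩ := GradedComm2Ring.invertible ℓ
  let e' : ℓ' ⊗ ℓ ≅ 𝟙_ C := β_ ℓ' ℓ ≪≫ e
  refine (Translate.conj (r := r') ℓ'
      ((λ_ g).symm ≪≫ whiskerRightIso e'.symm g ≪≫ α_ ℓ' ℓ g ≪≫ whiskerLeftIso ℓ' v.symm)
      (whiskerLeftIso ℓ' u.symm ≪≫ (α_ ℓ' ℓ h).symm ≪≫ whiskerRightIso e' h ≪≫ λ_ h)).of_eq
      ?_
  subst hu
  simp only [Iso.trans_hom, Iso.symm_hom, whiskerRightIso_hom, whiskerLeftIso_hom,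
    Category.assoc, MonoidalCategory.whiskerLeft_comp, Iso.hom_inv_id_assoc,
    whiskerLeft_hom_inv_assoc, whiskerLeft_inv_hom_assoc]
  rw [tensor_whiskerLeft_symm_assoc]
  simp only [Iso.hom_inv_id_assoc]
  rw [← whisker_exchange_assoc]
  simp

end Aux3

/-- In a graded commutative 2-ring, every translate of `r : g ⟶ h` is
equal to a left twist of `r` composed with isomorphisms on both sides, and also to a
right twist of `r` composed with isomorphisms on both sides; moreover, translation is
an equivalence relation on the morphisms of `R`. -/
theorem translate_eq_twist_and_equivalence
    {C : Type u} [Category.{v} C] [Preadditive C] [MonoidalCategory C]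
    [SymmetricCategory C] [MonoidalPreadditive C] [GradedComm2Ring C]
    {g h g' h' : C} (r : g ⟶ h) (r' : g' ⟶ h') (hr : Translate r r') :
    (∃ (ℓ : C) (v : g' ≅ ℓ ⊗ g) (u : ℓ ⊗ h ≅ h'), r' = v.hom ≫ (ℓ ◁ r) ≫ u.hom) ∧
    (∃ (ℓ' : C) (v' : g' ≅ g ⊗ ℓ') (u' : h ⊗ ℓ' ≅ h'), r' = v'.hom ≫ (r ▷ ℓ') ≫ u'.hom) ∧
    _root_.Equivalence
      (fun (a b : Σ (x : C) (y : C), x ⟶ y) => Translate a.2.2 b.2.2) := by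
  refine ⟨hr.leftTwist, hr.rightTwist, ⟨fun a => Translate.refl _,
    fun t => t.symm', fun t1 t2 => t1.trans' t2⟩⟩
end

section
/- Let r : g → h and s : h → ℓ be two composable morphisms of a graded commutative 2-ring R. Then there exist isomorphisms u : g ≅ h ⊗ (h^∨ ⊗ g) and v : ℓ ⊗ (h^∨ ⊗ h) ≅ ℓ such that s ∘ r = v ∘ (id_ℓ ⊗ (id_{h^∨} ⊗ r)) ∘ (s ⊗ id_{h^∨ ⊗ g}) ∘ u, where h^∨ denotes the dual of h. In particular, s ∘ r = r' ∘ s' for some translate r' of r and some translate s' of s. -/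
open CategoryTheory CategoryTheory.Limits CategoryTheory.MonoidalCategory

universe w v u v' u' v'' u''

/-- Pull-out lemma: if the "zigzag" built from `e` and `E` is the identity of `h`,
then the pseudo-commutativity equation holds with the evident `u` and `v`. -/
theorem pc_aux1 {C : Type u} [Category.{v} C] [MonoidalCategory C] {g h l hd : C}
    (e : hd ⊗ h ≅ 𝟙_ C) (E : 𝟙_ C ≅ h ⊗ hd)
    (hE : (λ_ h).inv ≫ E.hom ▷ h ≫ (α_ h hd h).hom ≫ h ◁ e.hom ≫ (ρ_ h).hom = 𝟙 h)
    (r : g ⟶ h) (s : h ⟶ l) :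
    r ≫ s = ((λ_ g).symm ≪≫ whiskerRightIso E g ≪≫ α_ h hd g).hom ≫
      (s ▷ (hd ⊗ g)) ≫ (l ◁ (hd ◁ r)) ≫ ((whiskerLeftIso l e) ≪≫ ρ_ l).hom := by
  simp only [Iso.trans_hom, Iso.symm_hom, whiskerRightIso_hom, whiskerLeftIso_hom,
    Category.assoc]
  -- pull `r` to the front
  rw [← whisker_exchange_assoc s (hd ◁ r)]
  rw [← associator_naturality_right_assoc h hd r]
  rw [← whisker_exchange_assoc E.hom r]
  rw [← leftUnitor_inv_naturality_assoc r]
  -- pull `s` to the back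
  rw [← whisker_exchange_assoc s e.hom]
  rw [MonoidalCategory.whiskerRight_id]
  -- now conclude from `hE`
  simp only [Category.assoc, Iso.inv_hom_id, Category.comp_id]
  rw [reassoc_of% hE]

/-- Correcting an arbitrary iso `w : 𝟙 ≅ h ⊗ hd` to one whose zigzag is the identity. -/
theorem pc_aux2 {C : Type u} [Category.{v} C] [MonoidalCategory C] {h hd : C}
    (e : hd ⊗ h ≅ 𝟙_ C) (w : 𝟙_ C ≅ h ⊗ hd) :
    ∃ E : 𝟙_ C ≅ h ⊗ hd,
      (λ_ h).inv ≫ E.hom ▷ h ≫ (α_ h hd h).hom ≫ h ◁ e.hom ≫ (ρ_ h).hom = 𝟙 h := by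
  set z : h ≅ h := (λ_ h).symm ≪≫ whiskerRightIso w h ≪≫ α_ h hd h ≪≫
    whiskerLeftIso h e ≪≫ ρ_ h with hz
  refine ⟨w ≪≫ whiskerRightIso z.symm hd, ?_⟩
  have hzh : z.hom = (λ_ h).inv ≫ w.hom ▷ h ≫ (α_ h hd h).hom ≫ h ◁ e.hom ≫ (ρ_ h).hom := by
    simp [hz]
  simp only [Iso.trans_hom, whiskerRightIso_hom, Iso.symm_hom, comp_whiskerRight,
    Category.assoc]
  rw [associator_naturality_left_assoc z.inv hd h]
  rw [← whisker_exchange_assoc z.inv e.hom]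
  rw [MonoidalCategory.whiskerRight_id]
  simp only [Category.assoc, Iso.inv_hom_id, Category.comp_id]
  rw [← reassoc_of% hzh]
  simp

/-- (Pseudo-commutativity.) For composable morphisms `r : g ⟶ h` and
`s : h ⟶ ℓ` in a graded commutative 2-ring there are isomorphisms
`u : g ≅ h ⊗ (h^∨ ⊗ g)` and `v : ℓ ⊗ (h^∨ ⊗ h) ≅ ℓ` (where `h^∨` is a dual of `h`)
such that `s ∘ r = v ∘ (id_ℓ ⊗ (id_{h^∨} ⊗ r)) ∘ (s ⊗ id_{h^∨ ⊗ g}) ∘ u`.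
In particular `s ∘ r = r' ∘ s'` for some translate `r'` of `r` and `s'` of `s`. -/
theorem pseudo_commutativity
    {C : Type u} [Category.{v} C] [Preadditive C] [MonoidalCategory C]
    [SymmetricCategory C] [MonoidalPreadditive C] [GradedComm2Ring C]
    {g h l : C} (r : g ⟶ h) (s : h ⟶ l) :
    (∃ (hd : C) (_ : hd ⊗ h ≅ 𝟙_ C) (u : g ≅ h ⊗ (hd ⊗ g)) (v : l ⊗ (hd ⊗ h) ≅ l),
      r ≫ s = u.hom ≫ (s ▷ (hd ⊗ g)) ≫ (l ◁ (hd ◁ r)) ≫ v.hom) ∧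
    (∃ (m : C) (s' : g ⟶ m) (r' : m ⟶ l),
      Translate s s' ∧ Translate r r' ∧ r ≫ s = s' ≫ r') := by
  obtain ⟨hd, ⟨e0⟩⟩ := GradedComm2Ring.invertible (C := C) h
  let e : hd ⊗ h ≅ 𝟙_ C := (β_ hd h) ≪≫ e0
  obtain ⟨E, hE⟩ := pc_aux2 e (e.symm ≪≫ β_ hd h)
  have key := pc_aux1 e E hE r s
  refine ⟨⟨hd, e, (λ_ g).symm ≪≫ whiskerRightIso E g ≪≫ α_ h hd g,
      whiskerLeftIso l e ≪≫ ρ_ l, key⟩,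
    ⟨l ⊗ (hd ⊗ g),
      ((λ_ g).symm ≪≫ whiskerRightIso E g ≪≫ α_ h hd g).hom ≫ s ▷ (hd ⊗ g),
      (l ◁ (hd ◁ r)) ≫ (whiskerLeftIso l e ≪≫ ρ_ l).hom, ?_, ?_, ?_⟩⟩
  · exact Translate.compIsoRight _ (Translate.whiskerRight _ (Translate.refl s))
  · exact Translate.compIsoLeft _ (Translate.whiskerLeft l (Translate.whiskerLeft hd (Translate.refl r)))
  · simpa [Category.assoc] using key
end

section
/- Let r : g → h and s : h → ℓ be composable morphisms of a graded commutative 2-ring R such that the composite s ∘ r is an isomorphism. Then both r and s are isomorphisms. Equivalently, in a graded commutative 2-ring any composite (on the right or on the left) of a non-invertible morphism is again non-invertible. -/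
open CategoryTheory CategoryTheory.Limits CategoryTheory.MonoidalCategory

universe w v u v' u' v'' u''

/-!
An endomorphism `f` of an invertible object `X` (with `X ⊗ Y ≅ 𝟙_`) is the action of the scalar
`f ▷ Y ∈ End (𝟙_)`, and scalars commute with every morphism. So if `i ≫ p = 𝟙` then
`p ≫ i = σ • 𝟙` for a scalar `σ`, and `𝟙 = i ≫ (p ≫ i) ≫ p = σ • (i ≫ p) = σ • 𝟙`, forcing `σ = 1`
and `p ≫ i = 𝟙`. Applied to `i = r`, `p = s ≫ (r ≫ s)⁻¹`, this makes `r`, hence `s`, invertible.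
-/

namespace CategoryTheory.MonoidalCategory

variable {C : Type*} [Category C] [MonoidalCategory C]

def scalarAct (σ : 𝟙_ C ⟶ 𝟙_ C) (X : C) : X ⟶ X :=
  (λ_ X).inv ≫ σ ▷ X ≫ (λ_ X).hom

section

variable (σ : 𝟙_ C ⟶ 𝟙_ C)

lemma scalarAct_naturality {X Y : C} (f : X ⟶ Y) :
    scalarAct σ X ≫ f = f ≫ scalarAct σ Y := by
  rw [scalarAct, scalarAct, Category.assoc, Category.assoc, ← leftUnitor_naturality,
    ← whisker_exchange_assoc, leftUnitor_inv_naturality_assoc]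

@[simp]
lemma scalarAct_id (X : C) : scalarAct (𝟙 (𝟙_ C)) X = 𝟙 X := by
  simp [scalarAct]

@[simp]
lemma scalarAct_unit : scalarAct σ (𝟙_ C) = σ := by
  simp [scalarAct, unitors_equal, unitors_inv_equal]

lemma scalarAct_tensor (X Y : C) : scalarAct σ (X ⊗ Y) = scalarAct σ X ▷ Y := by
  simp only [scalarAct, leftUnitor_tensor_hom, leftUnitor_tensor_inv, whiskerRight_tensor,
    comp_whiskerRight, Category.assoc, Iso.hom_inv_id_assoc]

end

lemma whiskerRight_injective {Y Z : C} (ε : Y ⊗ Z ≅ 𝟙_ C) {A B : C} {f f' : A ⟶ B}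
    (h : f ▷ Y = f' ▷ Y) : f = f' := by
  have hYZ : f ▷ (Y ⊗ Z) = f' ▷ (Y ⊗ Z) := by simp only [whiskerRight_tensor, h]
  have hunit : f ▷ 𝟙_ C = f' ▷ 𝟙_ C := by
    rw [← cancel_epi (A ◁ ε.hom), whisker_exchange, whisker_exchange, hYZ]
  simpa using hunit

lemma eq_of_scalarAct_eq {X Y : C} (ε : X ⊗ Y ≅ 𝟙_ C) {σ τ : 𝟙_ C ⟶ 𝟙_ C}
    (h : scalarAct σ X = scalarAct τ X) : σ = τ := by
  have key : ∀ ρ : 𝟙_ C ⟶ 𝟙_ C, ρ = ε.inv ≫ scalarAct ρ X ▷ Y ≫ ε.hom := fun ρ => by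
    rw [← scalarAct_tensor, scalarAct_naturality, ε.inv_hom_id_assoc, scalarAct_unit]
  rw [key σ, key τ, h]

lemma endo_eq_scalarAct {X Y Z : C} (ε : X ⊗ Y ≅ 𝟙_ C) (ε' : Y ⊗ Z ≅ 𝟙_ C) (f : X ⟶ X) :
    f = scalarAct (ε.inv ≫ f ▷ Y ≫ ε.hom) X := by
  apply whiskerRight_injective ε'
  rw [← scalarAct_tensor, ← cancel_mono ε.hom, scalarAct_naturality, scalarAct_unit,
    ε.hom_inv_id_assoc]

lemma isIso_of_comp_eq_id (hinv : ∀ X : C, ∃ X' : C, Nonempty (X ⊗ X' ≅ 𝟙_ C))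
    {X Y : C} (i : X ⟶ Y) (p : Y ⟶ X) (hip : i ≫ p = 𝟙 X) : IsIso i := by
  obtain ⟨X', ⟨εX⟩⟩ := hinv X
  obtain ⟨Y', ⟨εY⟩⟩ := hinv Y
  obtain ⟨Y'', ⟨εY'⟩⟩ := hinv Y'
  obtain ⟨σ, hpi⟩ : ∃ σ, p ≫ i = scalarAct σ Y := ⟨_, endo_eq_scalarAct εY εY' (p ≫ i)⟩
  have hσX : scalarAct σ X = scalarAct (𝟙 _) X := calc
    scalarAct σ X = i ≫ scalarAct σ Y ≫ p := by
      rw [← Category.assoc, ← scalarAct_naturality, Category.assoc, hip, Category.comp_id]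
    _ = scalarAct (𝟙 _) X := by rw [← hpi, Category.assoc, reassoc_of% hip, hip, scalarAct_id]
  have hσ : σ = 𝟙 _ := eq_of_scalarAct_eq εX hσX
  exact ⟨p, hip, by rw [hpi, hσ, scalarAct_id]⟩

end CategoryTheory.MonoidalCategory

/-- In a graded commutative 2-ring, if a composite `s ∘ r` is an
isomorphism then both `r` and `s` are isomorphisms; equivalently, any composite (on
either side) of a non-invertible morphism is again non-invertible. -/
theorem isIso_of_isIso_comp
    {C : Type u} [Category.{v} C] [Preadditive C] [MonoidalCategory C]
    [SymmetricCategory C] [MonoidalPreadditive C] [GradedComm2Ring C]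
    {g h l : C} (r : g ⟶ h) (s : h ⟶ l) (hrs : IsIso (r ≫ s)) :
    IsIso r ∧ IsIso s := by
  have hr : IsIso r :=
    isIso_of_comp_eq_id GradedComm2Ring.invertible r (s ≫ inv (r ≫ s))
      (by rw [← Category.assoc, IsIso.hom_inv_id])
  exact ⟨hr, IsIso.of_isIso_comp_left r s⟩
end

section
/- Let r : g → h be a morphism of a graded commutative 2-ring R, and let ⟨r⟩ denote the smallest homogeneous ideal of R containing r. Then for all objects g', h' of R, a morphism f : g' → h' belongs to ⟨r⟩ if and only if f = s ∘ (id_ℓ ⊗ r) ∘ u for some object ℓ of R, some isomorphism u : g' ≅ ℓ ⊗ g and some morphism s : ℓ ⊗ h → h'; and this holds if and only if f = v ∘ (r ⊗ id_k) ∘ t for some object k of R, some morphism t : g' → g ⊗ k and some isomorphism v : h ⊗ k ≅ h'. -/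
open CategoryTheory CategoryTheory.Limits CategoryTheory.MonoidalCategory

universe w v u v' u' v'' u''

section IdealDef

variable (C : Type u) [Category.{v} C] [Preadditive C] [MonoidalCategory C]

/-- A *homogeneous ideal* of a graded commutative 2-ring: a family of subgroups
`I(g,h) ⊆ Hom(g,h)` closed under composition with arbitrary morphisms on either side
and under tensoring with arbitrary morphisms on either side. -/
structure HomIdeal where
  carrier : ∀ g h : C, AddSubgroup (g ⟶ h)
  comp_left : ∀ {g h h' : C} (r : g ⟶ h) (s : h ⟶ h'),
      r ∈ carrier g h → r ≫ s ∈ carrier g h'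
  comp_right : ∀ {g' g h : C} (t : g' ⟶ g) (r : g ⟶ h),
      r ∈ carrier g h → t ≫ r ∈ carrier g' h
  tensor_left : ∀ {g h g' h' : C} (s : g' ⟶ h') (r : g ⟶ h),
      r ∈ carrier g h → (s ⊗ₘ r) ∈ carrier (g' ⊗ g) (h' ⊗ h)
  tensor_right : ∀ {g h g' h' : C} (r : g ⟶ h) (s : g' ⟶ h'),
      r ∈ carrier g h → (r ⊗ₘ s) ∈ carrier (g ⊗ g') (h ⊗ h')

variable {C}

namespace HomIdeal

instance : PartialOrder (HomIdeal C) where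
  le I J := ∀ g h : C, I.carrier g h ≤ J.carrier g h
  le_refl I g h := le_rfl
  le_trans I J K h₁ h₂ g h := (h₁ g h).trans (h₂ g h)
  le_antisymm I J h₁ h₂ := by
    cases I; cases J
    congr
    funext g h
    exact le_antisymm (h₁ g h) (h₂ g h)

/-- A homogeneous ideal is *proper* if it contains no identity morphism. -/
def IsProper (I : HomIdeal C) : Prop := ∀ g : C, 𝟙 g ∉ I.carrier g g

/-- A proper homogeneous ideal is *prime* if whenever a composite belongs to it, one
of the factors belongs to it. -/
structure IsPrime (I : HomIdeal C) : Prop where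
  isProper : I.IsProper
  mem_or_mem : ∀ {g h l : C} (r : g ⟶ h) (s : h ⟶ l),
      r ≫ s ∈ I.carrier g l → r ∈ I.carrier g h ∨ s ∈ I.carrier h l

end HomIdeal

end IdealDef

section
variable {C : Type u} [Category.{v} C] [Preadditive C] [MonoidalCategory C]

/-- Membership in the smallest homogeneous ideal containing the morphism `r`:
`f` belongs to every homogeneous ideal containing `r`. -/
def MemSpan {g h : C} (r : g ⟶ h) {g' h' : C} (f : g' ⟶ h') : Prop :=
  ∀ K : HomIdeal C, r ∈ K.carrier g h → f ∈ K.carrier g' h'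

end

/-!
Since every object `g` is invertible, `- ⊗ g` is an autoequivalence: every object is
isomorphic to some `m ⊗ g` and every morphism `a ⊗ g ⟶ b ⊗ g` is `w ▷ g` for some `w`.
Consequently a composite `t ≫ ℓ ◁ r ≫ s` with arbitrary `t` can be rewritten as
`u ≫ m ◁ r ≫ s'` for any prescribed isomorphism `u : g' ≅ m ⊗ g`. Choosing a common `u`
makes these factorizations closed under addition; the remaining ideal axioms are immediate,
using the braiding for tensoring on the right. So they form the smallest homogeneous ideal
containing `r`, and the braiding turns `ℓ ◁ r` into `r ▷ ℓ`, which gives the second form.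
-/

section Invertible
variable {C : Type u} [Category.{v} C] [MonoidalCategory C] {X Y : C}

noncomputable def tensorRightEquivalence (e : X ⊗ Y ≅ 𝟙_ C) (e' : Y ⊗ X ≅ 𝟙_ C) : C ≌ C :=
  CategoryTheory.Equivalence.mk (tensorRight X) (tensorRight Y)
    ((rightUnitorNatIso C).symm ≪≫ (tensoringRight C).mapIso e.symm ≪≫ tensorRightTensor X Y)
    ((tensorRightTensor Y X).symm ≪≫ (tensoringRight C).mapIso e' ≪≫ rightUnitorNatIso C)

theorem whiskerRight_surjective_of_tensor_iso (e : X ⊗ Y ≅ 𝟙_ C) (e' : Y ⊗ X ≅ 𝟙_ C)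
    {a b : C} : Function.Surjective (fun w : a ⟶ b => w ▷ X) :=
  have : (tensorRight X).Full := (tensorRightEquivalence e e').full_functor
  (tensorRight X).map_surjective

end Invertible

section Factorization
variable {C : Type u} [Category.{v} C] [MonoidalCategory C] {g h : C}

def FactorsThroughWhiskerLeft (r : g ⟶ h) {g' h' : C} (f : g' ⟶ h') : Prop :=
  ∃ (ℓ : C) (u : g' ≅ ℓ ⊗ g) (s : ℓ ⊗ h ⟶ h'), f = u.hom ≫ ℓ ◁ r ≫ s

def FactorsThroughWhiskerRight (r : g ⟶ h) {g' h' : C} (f : g' ⟶ h') : Prop :=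
  ∃ (k : C) (t : g' ⟶ g ⊗ k) (v : h ⊗ k ≅ h'), f = t ≫ r ▷ k ≫ v.hom

namespace FactorsThroughWhiskerLeft

theorem self (r : g ⟶ h) : FactorsThroughWhiskerLeft r r :=
  ⟨𝟙_ C, (λ_ g).symm, (λ_ h).hom, by simp⟩

variable {r : g ⟶ h} {g' h' : C} {f : g' ⟶ h'}

theorem comp_left (hf : FactorsThroughWhiskerLeft r f) {h'' : C} (s' : h' ⟶ h'') :
    FactorsThroughWhiskerLeft r (f ≫ s') := by
  obtain ⟨ℓ, u, s, rfl⟩ := hf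
  exact ⟨ℓ, u, s ≫ s', by simp⟩

theorem whiskerLeft (a : C) (hf : FactorsThroughWhiskerLeft r f) :
    FactorsThroughWhiskerLeft r (a ◁ f) := by
  obtain ⟨ℓ, u, s, rfl⟩ := hf
  refine ⟨a ⊗ ℓ, whiskerLeftIso a u ≪≫ (α_ a ℓ g).symm, (α_ a ℓ h).hom ≫ a ◁ s, ?_⟩
  simp

theorem neg [Preadditive C] (hf : FactorsThroughWhiskerLeft r f) :
    FactorsThroughWhiskerLeft r (-f) := by
  obtain ⟨ℓ, u, s, rfl⟩ := hf
  exact ⟨ℓ, u, -s, by simp⟩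

theorem memSpan [Preadditive C] (hf : FactorsThroughWhiskerLeft r f) : MemSpan r f := by
  obtain ⟨ℓ, u, s, rfl⟩ := hf
  intro K hr
  have hℓr : ℓ ◁ r ∈ K.carrier _ _ := by simpa using K.tensor_left (𝟙 ℓ) r hr
  exact K.comp_right u.hom _ (K.comp_left _ s hℓr)

end FactorsThroughWhiskerLeft

end Factorization

section PrincipalIdeal
variable {C : Type u} [Category.{v} C] [Preadditive C] [MonoidalCategory C]
  [SymmetricCategory C] [MonoidalPreadditive C] [GradedComm2Ring C]

namespace GradedComm2Ring

theorem exists_tensor_iso_unit (g : C) :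
    ∃ g' : C, Nonempty (g ⊗ g' ≅ 𝟙_ C) ∧ Nonempty (g' ⊗ g ≅ 𝟙_ C) := by
  obtain ⟨g', ⟨e⟩⟩ := invertible g
  exact ⟨g', ⟨e⟩, ⟨β_ g' g ≪≫ e⟩⟩

theorem exists_iso_tensor_right (g x : C) : ∃ m : C, Nonempty (x ≅ m ⊗ g) := by
  obtain ⟨g', -, ⟨e'⟩⟩ := exists_tensor_iso_unit g
  exact ⟨x ⊗ g', ⟨(ρ_ x).symm ≪≫ whiskerLeftIso x e'.symm ≪≫ (α_ x g' g).symm⟩⟩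

theorem exists_tensor_left_iso (g x : C) : ∃ k : C, Nonempty (g ⊗ k ≅ x) := by
  obtain ⟨m, ⟨u⟩⟩ := exists_iso_tensor_right g x
  exact ⟨m, ⟨β_ g m ≪≫ u.symm⟩⟩

theorem whiskerRight_surjective (g : C) {a b : C} :
    Function.Surjective (fun w : a ⟶ b => w ▷ g) := by
  obtain ⟨g', ⟨e⟩, ⟨e'⟩⟩ := exists_tensor_iso_unit g
  exact whiskerRight_surjective_of_tensor_iso e e'

theorem whiskerLeft_surjective (g : C) {a b : C} :
    Function.Surjective (fun w : a ⟶ b => g ◁ w) := by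
  intro w
  obtain ⟨w', hw'⟩ := whiskerRight_surjective g ((β_ a g).hom ≫ w ≫ (β_ b g).inv)
  refine ⟨w', ?_⟩
  dsimp only at hw' ⊢
  rw [← cancel_epi (β_ a g).hom, ← BraidedCategory.braiding_naturality_left, hw']
  simp

end GradedComm2Ring

namespace FactorsThroughWhiskerLeft
variable {g h : C} (r : g ⟶ h) {g' h' : C}

theorem exists_eq_comp_whiskerLeft_comp {ℓ m : C} (u : g' ≅ m ⊗ g) (t : g' ⟶ ℓ ⊗ g)
    (s : ℓ ⊗ h ⟶ h') : ∃ s' : m ⊗ h ⟶ h', t ≫ ℓ ◁ r ≫ s = u.hom ≫ m ◁ r ≫ s' := by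
  obtain ⟨w, hw⟩ := GradedComm2Ring.whiskerRight_surjective g (u.inv ≫ t)
  refine ⟨w ▷ h ≫ s, ?_⟩
  dsimp only at hw
  rw [whisker_exchange_assoc, hw, Category.assoc, Iso.hom_inv_id_assoc]

theorem of_comp {ℓ : C} (t : g' ⟶ ℓ ⊗ g) (s : ℓ ⊗ h ⟶ h') :
    FactorsThroughWhiskerLeft r (t ≫ ℓ ◁ r ≫ s) := by
  obtain ⟨m, ⟨u⟩⟩ := GradedComm2Ring.exists_iso_tensor_right g g'
  obtain ⟨s', hs'⟩ := exists_eq_comp_whiskerLeft_comp r u t s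
  exact ⟨m, u, s', hs'⟩

theorem zero : FactorsThroughWhiskerLeft r (0 : g' ⟶ h') := by
  simpa using of_comp r (0 : g' ⟶ 𝟙_ C ⊗ g) 0

variable {r} {f₁ f₂ : g' ⟶ h'}

theorem add (h₁ : FactorsThroughWhiskerLeft r f₁) (h₂ : FactorsThroughWhiskerLeft r f₂) :
    FactorsThroughWhiskerLeft r (f₁ + f₂) := by
  obtain ⟨ℓ, u, s₁, rfl⟩ := h₁
  obtain ⟨ℓ₂, u₂, s₂, rfl⟩ := h₂
  obtain ⟨s, hs⟩ := exists_eq_comp_whiskerLeft_comp r u u₂.hom s₂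
  exact ⟨ℓ, u, s₁ + s, by rw [hs]; simp⟩

theorem comp_right {g'' : C} (t : g'' ⟶ g') (hf : FactorsThroughWhiskerLeft r f₁) :
    FactorsThroughWhiskerLeft r (t ≫ f₁) := by
  obtain ⟨ℓ, u, s, rfl⟩ := hf
  simpa using of_comp r (t ≫ u.hom) s

theorem whiskerRight (hf : FactorsThroughWhiskerLeft r f₁) (a : C) :
    FactorsThroughWhiskerLeft r (f₁ ▷ a) := by
  have hβ : f₁ ▷ a = (β_ g' a).hom ≫ a ◁ f₁ ≫ (β_ h' a).inv := by simp
  rw [hβ]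
  exact ((hf.whiskerLeft a).comp_left _).comp_right _

theorem tensor_left {a b : C} (x : a ⟶ b) (hf : FactorsThroughWhiskerLeft r f₁) :
    FactorsThroughWhiskerLeft r (x ⊗ₘ f₁) := by
  rw [MonoidalCategory.tensorHom_def]
  exact (hf.whiskerLeft b).comp_right _

theorem tensor_right {a b : C} (hf : FactorsThroughWhiskerLeft r f₁) (x : a ⟶ b) :
    FactorsThroughWhiskerLeft r (f₁ ⊗ₘ x) := by
  rw [MonoidalCategory.tensorHom_def']
  exact (hf.whiskerRight b).comp_right _

end FactorsThroughWhiskerLeft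

variable {g h : C}

def HomIdeal.span (r : g ⟶ h) : HomIdeal C where
  carrier _ _ :=
    { carrier := {f | FactorsThroughWhiskerLeft r f}
      add_mem' := .add
      zero_mem' := .zero r
      neg_mem' := .neg }
  comp_left _ s hf := hf.comp_left s
  comp_right t _ hf := hf.comp_right t
  tensor_left s _ hf := hf.tensor_left s
  tensor_right _ s hf := hf.tensor_right s

theorem memSpan_iff_factorsThroughWhiskerLeft (r : g ⟶ h) {g' h' : C} (f : g' ⟶ h') :
    MemSpan r f ↔ FactorsThroughWhiskerLeft r f :=
  ⟨fun hf => hf (HomIdeal.span r) (.self r), FactorsThroughWhiskerLeft.memSpan⟩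

theorem factorsThroughWhiskerLeft_iff_factorsThroughWhiskerRight (r : g ⟶ h) {g' h' : C}
    (f : g' ⟶ h') : FactorsThroughWhiskerLeft r f ↔ FactorsThroughWhiskerRight r f := by
  constructor
  · rintro ⟨ℓ, u, s, rfl⟩
    obtain ⟨k, ⟨v⟩⟩ := GradedComm2Ring.exists_tensor_left_iso h h'
    obtain ⟨w, hw⟩ := GradedComm2Ring.whiskerLeft_surjective h ((β_ ℓ h).inv ≫ s ≫ v.inv)
    refine ⟨k, u.hom ≫ (β_ ℓ g).hom ≫ g ◁ w, v, ?_⟩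
    dsimp only at hw
    rw [Category.assoc, Category.assoc, whisker_exchange_assoc, hw,
      ← BraidedCategory.braiding_naturality_right_assoc]
    simp
  · rintro ⟨k, t, v, rfl⟩
    have hβ : r ▷ k = (β_ g k).hom ≫ k ◁ r ≫ (β_ h k).inv := by
      rw [← BraidedCategory.braiding_naturality_left_assoc, Iso.hom_inv_id, Category.comp_id]
    rw [hβ]
    simpa only [Category.assoc] using
      FactorsThroughWhiskerLeft.of_comp r (t ≫ (β_ g k).hom) ((β_ h k).inv ≫ v.hom)

end PrincipalIdeal

/-- Explicit description of the principal homogeneous ideal `⟨r⟩`: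
a morphism `f : g' ⟶ h'` lies in `⟨r⟩` iff it has the form `s ∘ (id_ℓ ⊗ r) ∘ u` for an
object `ℓ`, an isomorphism `u : g' ≅ ℓ ⊗ g` and a morphism `s : ℓ ⊗ h ⟶ h'`; and iff it
has the form `v ∘ (r ⊗ id_k) ∘ t` for an object `k`, a morphism `t : g' ⟶ g ⊗ k` and an
isomorphism `v : h ⊗ k ≅ h'`. -/
theorem memSpan_iff
    {C : Type u} [Category.{v} C] [Preadditive C] [MonoidalCategory C]
    [SymmetricCategory C] [MonoidalPreadditive C] [GradedComm2Ring C]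
    {g h : C} (r : g ⟶ h) {g' h' : C} (f : g' ⟶ h') :
    (MemSpan r f ↔
      ∃ (ℓ : C) (u : g' ≅ ℓ ⊗ g) (s : ℓ ⊗ h ⟶ h'), f = u.hom ≫ (ℓ ◁ r) ≫ s) ∧
    (MemSpan r f ↔
      ∃ (k : C) (t : g' ⟶ g ⊗ k) (v : h ⊗ k ≅ h'), f = t ≫ (r ▷ k) ≫ v.hom) :=
  ⟨memSpan_iff_factorsThroughWhiskerLeft r f,
    (memSpan_iff_factorsThroughWhiskerLeft r f).trans
      (factorsThroughWhiskerLeft_iff_factorsThroughWhiskerRight r f)⟩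
end

section
/- Let I and J be two homogeneous ideals of a graded commutative 2-ring R. Then the categorical product I∘J, consisting of all finite sums s₁∘t₁ + … + sₙ∘tₙ of composites with sᵢ ∈ I and tᵢ ∈ J, coincides with the tensor product I⊗J, the homogeneous ideal generated by all morphisms s ⊗ t with s ∈ I and t ∈ J. In particular, denoting this common ideal by IJ, one has IJ = JI. -/
open CategoryTheory CategoryTheory.Limits CategoryTheory.MonoidalCategory

universe w v u v' u' v'' u''

section
variable {C : Type u} [Category.{v} C] [Preadditive C] [MonoidalCategory C]

/-- Membership in the categorical product `I ∘ J` of two homogeneous ideals: the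
subgroup of `Hom(g',h')` generated by composites `t ≫ s` (i.e. `s ∘ t`) with
`s ∈ I` and `t ∈ J`; its elements are exactly the finite sums of such composites. -/
def MemCompProd (I J : HomIdeal C) {g' h' : C} (f : g' ⟶ h') : Prop :=
  f ∈ AddSubgroup.closure {f : g' ⟶ h' | ∃ (m : C) (t : g' ⟶ m) (s : m ⟶ h'),
    t ∈ J.carrier g' m ∧ s ∈ I.carrier m h' ∧ f = t ≫ s}

/-- Membership in the tensor product `I ⊗ J` of two homogeneous ideals: the
homogeneous ideal generated by the morphisms `s ⊗ t` with `s ∈ I` and `t ∈ J`. -/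
def MemTensorProd (I J : HomIdeal C) {g' h' : C} (f : g' ⟶ h') : Prop :=
  ∀ K : HomIdeal C,
    (∀ {a b c d : C} (s : a ⟶ b) (t : c ⟶ d),
      s ∈ I.carrier a b → t ∈ J.carrier c d → (s ⊗ₘ t) ∈ K.carrier (a ⊗ c) (b ⊗ d)) →
    f ∈ K.carrier g' h'

end

/-!
A composite `t ≫ s` through an object `m` is recovered from `s ⊗ t` by tensoring with an
inverse `m'` of `m` and conjugating with the isomorphisms `g ≅ (g ⊗ m) ⊗ m' ≅ (m ⊗ g) ⊗ m'`
and `(h ⊗ m) ⊗ m' ≅ h`; the result is `t ≫ θ ≫ s` for the twist automorphism `θ` of `m`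
(the braiding of `m` with itself, transported along `m ⊗ m' ≅ 𝟙`), and `θ` is absorbed
into `s`. Hence `I ∘ J ⊆ I ⊗ J`. Conversely `I ∘ J` is itself a homogeneous ideal
containing `s ⊗ t = (𝟙 ⊗ t) ≫ (s ⊗ 𝟙)`. Since `s ⊗ t` and `t ⊗ s` differ by braidings,
`I ⊗ J = J ⊗ I`, whence `I ∘ J = J ∘ I`.
-/

theorem AddSubgroup.apply_mem_closure_of_forall_mem {G H : Type*} [AddGroup G] [AddGroup H]
    (φ : G →+ H) {S : Set G} {T : Set H} (hS : ∀ x ∈ S, φ x ∈ closure T) {x : G}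
    (hx : x ∈ closure S) : φ x ∈ closure T :=
  (closure_le ((closure T).comap φ)).2 hS hx

variable {C : Type u} [Category.{v} C] [MonoidalCategory C]

section Twist

variable [BraidedCategory C] {m m' : C}

def twist (e : m ⊗ m' ≅ 𝟙_ C) : m ≅ m :=
  (ρ_ m).symm ≪≫ whiskerLeftIso m e.symm ≪≫ (α_ m m m').symm ≪≫
    whiskerRightIso (β_ m m) m' ≪≫ α_ m m m' ≪≫ whiskerLeftIso m e ≪≫ ρ_ m

theorem conj_tensorHom_whiskerRight_eq (e : m ⊗ m' ≅ 𝟙_ C) {g h : C} (t : g ⟶ m) (s : m ⟶ h) :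
    ((ρ_ g).inv ≫ g ◁ e.inv ≫ (α_ g m m').inv ≫ (β_ g m).hom ▷ m') ≫
      (s ⊗ₘ t) ▷ m' ≫ ((α_ h m m').hom ≫ h ◁ e.hom ≫ (ρ_ h).hom)
    = t ≫ (twist e).hom ≫ s := by
  simp only [twist, Iso.trans_hom, Iso.symm_hom, whiskerLeftIso_hom, whiskerRightIso_hom,
    MonoidalCategory.tensorHom_def, comp_whiskerRight, Category.assoc]
  slice_lhs 4 5 => rw [← comp_whiskerRight, ← BraidedCategory.braiding_naturality_right,
    comp_whiskerRight]
  slice_lhs 5 6 => rw [← comp_whiskerRight, ← BraidedCategory.braiding_naturality_left,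
    comp_whiskerRight]
  slice_lhs 4 5 => rw [← comp_whiskerRight, whisker_exchange, comp_whiskerRight]
  slice_lhs 3 4 => rw [← associator_inv_naturality_left]
  slice_lhs 2 3 => rw [whisker_exchange]
  slice_lhs 1 2 => rw [← rightUnitor_inv_naturality]
  slice_lhs 5 6 => rw [← comp_whiskerRight, BraidedCategory.braiding_naturality_right,
    comp_whiskerRight]
  slice_lhs 6 7 => rw [associator_naturality_left]
  slice_lhs 7 8 => rw [← whisker_exchange]
  simp

end Twist

variable [Preadditive C]

namespace HomIdeal

theorem comp_twist_comp_mem_of_tensorHom_mem [BraidedCategory C] (K : HomIdeal C) {m m' : C}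
    (e : m ⊗ m' ≅ 𝟙_ C) {g h : C} {t : g ⟶ m} {s : m ⟶ h}
    (hst : (s ⊗ₘ t) ∈ K.carrier (m ⊗ g) (h ⊗ m)) : t ≫ (twist e).hom ≫ s ∈ K.carrier g h := by
  rw [← conj_tensorHom_whiskerRight_eq]
  refine K.comp_right _ _ (K.comp_left _ _ ?_)
  simpa only [tensorHom_id] using K.tensor_right _ (𝟙 m') hst

variable [MonoidalPreadditive C]

open AddSubgroup in
def compProd (I J : HomIdeal C) : HomIdeal C where
  carrier g h := closure {f : g ⟶ h | ∃ (m : C) (t : g ⟶ m) (s : m ⟶ h),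
    t ∈ J.carrier g m ∧ s ∈ I.carrier m h ∧ f = t ≫ s}
  comp_left {_ _ _} r x hr := by
    refine apply_mem_closure_of_forall_mem (Preadditive.rightComp _ x) ?_ hr
    rintro _ ⟨m, t, s, ht, hs, rfl⟩
    exact subset_closure ⟨m, t, s ≫ x, ht, I.comp_left s x hs, Category.assoc t s x⟩
  comp_right {_ _ _} x r hr := by
    refine apply_mem_closure_of_forall_mem (Preadditive.leftComp _ x) ?_ hr
    rintro _ ⟨m, t, s, ht, hs, rfl⟩
    exact subset_closure ⟨m, x ≫ t, s, J.comp_right x t ht, hs, (Category.assoc x t s).symm⟩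
  tensor_left {_ _ _ h''} x r hr := by
    refine apply_mem_closure_of_forall_mem
      (AddMonoidHom.mk' (x ⊗ₘ ·) (MonoidalPreadditive.tensor_add x)) ?_ hr
    rintro _ ⟨m, t, s, ht, hs, rfl⟩
    exact subset_closure ⟨h'' ⊗ m, x ⊗ₘ t, 𝟙 h'' ⊗ₘ s, J.tensor_left x t ht,
      I.tensor_left (𝟙 h'') s hs, by simp [MonoidalCategory.tensorHom_def]⟩
  tensor_right {_ _ _ h''} r x hr := by
    refine apply_mem_closure_of_forall_mem
      (AddMonoidHom.mk' (· ⊗ₘ x) (MonoidalPreadditive.add_tensor · · x)) ?_ hr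
    rintro _ ⟨m, t, s, ht, hs, rfl⟩
    exact subset_closure ⟨m ⊗ h'', t ⊗ₘ x, s ⊗ₘ 𝟙 h'', J.tensor_right t x ht,
      I.tensor_right s (𝟙 h'') hs, by simp [MonoidalCategory.tensorHom_def, whisker_exchange]⟩

theorem tensorHom_mem_compProd (I J : HomIdeal C) {a b c d : C} (s : a ⟶ b) (t : c ⟶ d)
    (hs : s ∈ I.carrier a b) (ht : t ∈ J.carrier c d) :
    (s ⊗ₘ t) ∈ (compProd I J).carrier (a ⊗ c) (b ⊗ d) :=
  AddSubgroup.subset_closure ⟨a ⊗ d, a ◁ t, s ▷ d, by simpa using J.tensor_left (𝟙 a) t ht,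
    by simpa using I.tensor_right s (𝟙 d) hs, tensorHom_def' s t⟩

end HomIdeal

theorem MemTensorProd.memCompProd [MonoidalPreadditive C] {I J : HomIdeal C} {g h : C}
    {f : g ⟶ h} (hf : MemTensorProd I J f) : MemCompProd I J f :=
  hf (HomIdeal.compProd I J) (HomIdeal.tensorHom_mem_compProd I J)

theorem MemTensorProd.symm [BraidedCategory C] {I J : HomIdeal C} {g h : C} {f : g ⟶ h}
    (hf : MemTensorProd I J f) : MemTensorProd J I f := by
  refine fun K hK => hf K fun s t hs ht => ?_
  have hts : (β_ _ _).hom ≫ (t ⊗ₘ s) ≫ (β_ _ _).inv ∈ K.carrier _ _ :=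
    K.comp_right _ _ (K.comp_left _ _ (hK t s ht hs))
  rwa [← BraidedCategory.braiding_naturality_assoc, Iso.hom_inv_id, Category.comp_id] at hts

theorem MemCompProd.memTensorProd [BraidedCategory C] {I J : HomIdeal C} {g h : C}
    {f : g ⟶ h} (hinv : ∀ m : C, ∃ m' : C, Nonempty (m ⊗ m' ≅ 𝟙_ C))
    (hf : MemCompProd I J f) : MemTensorProd I J f := by
  refine fun K hK => (AddSubgroup.closure_le (K.carrier g h)).2 ?_ hf
  rintro _ ⟨m, t, s, ht, hs, rfl⟩
  obtain ⟨m', ⟨e⟩⟩ := hinv m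
  have h := K.comp_twist_comp_mem_of_tensorHom_mem e
    (hK ((twist e).inv ≫ s) t (I.comp_right _ s hs) ht)
  rwa [Iso.hom_inv_id_assoc] at h

/-- For homogeneous ideals `I`, `J` of a graded commutative 2-ring,
the categorical product `I ∘ J` (finite sums of composites `sᵢ ∘ tᵢ`, `sᵢ ∈ I`,
`tᵢ ∈ J`) coincides with the tensor product `I ⊗ J` (the homogeneous ideal generated
by the `s ⊗ t`); in particular the common ideal `IJ` satisfies `IJ = JI`. -/
theorem compProd_eq_tensorProd
    {C : Type u} [Category.{v} C] [Preadditive C] [MonoidalCategory C]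
    [SymmetricCategory C] [MonoidalPreadditive C] [GradedComm2Ring C]
    (I J : HomIdeal C) {g' h' : C} (f : g' ⟶ h') :
    (MemCompProd I J f ↔ MemTensorProd I J f) ∧
    (MemCompProd I J f ↔ MemCompProd J I f) := by
  have hcomp : ∀ I J : HomIdeal C, MemCompProd I J f ↔ MemTensorProd I J f := fun _ _ =>
    ⟨MemCompProd.memTensorProd GradedComm2Ring.invertible, MemTensorProd.memCompProd⟩
  rw [hcomp I J, hcomp J I]
  exact ⟨Iff.rfl, MemTensorProd.symm, MemTensorProd.symm⟩
end

section
/- Let R be a graded commutative 2-ring. Then every maximal element of the poset of proper homogeneous ideals of R is a prime homogeneous ideal, and every proper homogeneous ideal of R is contained in some prime homogeneous ideal. -/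
open CategoryTheory CategoryTheory.Limits CategoryTheory.MonoidalCategory

universe w v u v' u' v'' u''

/-! If `r ≫ s ∈ I` with `r, s ∉ I` and `I` maximal, the ideals generated by `I` and `r`, resp.
`I` and `s`, are improper, so both contain `𝟙 (a ⊗ b)` for suitable `a`, `b`. Every morphism
between objects of the form `x ⊗ h` is a whiskering `w ▷ h` when `h` is invertible; applied to the
middle object `h` of `r ≫ s`, this lets the generators `u ≫ a ◁ r ≫ v` and `u' ≫ a' ◁ s ≫ v'` be
composed into `u ≫ w ▷ _ ≫ a' ◁ (r ≫ s) ≫ v' ∈ I`. Hence `𝟙 (a ⊗ b) = 𝟙 ≫ 𝟙 ∈ I`, a contradiction.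
Primes above a proper ideal then come from Zorn's lemma. -/

section Invertible

variable {C : Type u} [Category.{v} C] [MonoidalCategory C] [BraidedCategory C]

def tensorRightEquivOfIsoUnit {h h' : C} (e : h ⊗ h' ≅ 𝟙_ C) : C ≌ C :=
  CategoryTheory.Equivalence.mk (tensorRight h) (tensorRight h')
    ((rightUnitorNatIso C).symm ≪≫ (tensoringRight C).mapIso e.symm ≪≫ tensorRightTensor h h')
    ((tensorRightTensor h' h).symm ≪≫ (tensoringRight C).mapIso (β_ h' h ≪≫ e) ≪≫
      rightUnitorNatIso C)

lemma exists_whiskerRight_eq_of_iso_unit {h h' : C} (e : h ⊗ h' ≅ 𝟙_ C) {x y : C}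
    (w : x ⊗ h ⟶ y ⊗ h) : ∃ w' : x ⟶ y, w' ▷ h = w :=
  (tensorRightEquivOfIsoUnit e).fullyFaithfulFunctor.map_surjective (X := x) (Y := y) w

end Invertible

lemma AddSubgroup.apply_mem_of_mem_closure {M N : Type*} [AddCommGroup M] [AddCommGroup N]
    (φ : M →+ N) {s : Set M} {K : AddSubgroup N} (hs : ∀ m ∈ s, φ m ∈ K) {m : M}
    (hm : m ∈ AddSubgroup.closure s) : φ m ∈ K :=
  (AddSubgroup.closure_le (K.comap φ)).2 hs hm

namespace HomIdeal

variable {C : Type u} [Category.{v} C] [Preadditive C] [MonoidalCategory C]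

lemma whiskerLeft_mem (I : HomIdeal C) (a : C) {g h : C} {r : g ⟶ h}
    (hr : r ∈ I.carrier g h) : a ◁ r ∈ I.carrier (a ⊗ g) (a ⊗ h) := by
  simpa using I.tensor_left (𝟙 a) r hr

lemma whiskerRight_mem (I : HomIdeal C) (a : C) {g h : C} {r : g ⟶ h}
    (hr : r ∈ I.carrier g h) : r ▷ a ∈ I.carrier (g ⊗ a) (h ⊗ a) := by
  simpa using I.tensor_right r (𝟙 a) hr

def ofWhiskerLeft [BraidedCategory C] (carrier : ∀ g h : C, AddSubgroup (g ⟶ h))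
    (comp_left : ∀ {g h h' : C} (r : g ⟶ h) (s : h ⟶ h'),
      r ∈ carrier g h → r ≫ s ∈ carrier g h')
    (comp_right : ∀ {g' g h : C} (t : g' ⟶ g) (r : g ⟶ h),
      r ∈ carrier g h → t ≫ r ∈ carrier g' h)
    (whiskerLeft : ∀ {g h : C} (a : C) (r : g ⟶ h),
      r ∈ carrier g h → a ◁ r ∈ carrier (a ⊗ g) (a ⊗ h)) : HomIdeal C where
  carrier := carrier
  comp_left := comp_left
  comp_right := comp_right
  tensor_left s r hr := by
    rw [MonoidalCategory.tensorHom_def]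
    exact comp_right _ _ (whiskerLeft _ r hr)
  tensor_right {g h g' h'} r s hr := by
    have hbraid : r ▷ g' = (β_ g g').hom ≫ g' ◁ r ≫ (β_ h g').inv := by simp
    rw [MonoidalCategory.tensorHom_def, hbraid]
    exact comp_left _ _ (comp_right _ _ (comp_left _ _ (whiskerLeft _ r hr)))

def IsMaximal (M : HomIdeal C) : Prop :=
  M.IsProper ∧ ∀ J : HomIdeal C, J.IsProper → M ≤ J → J = M

def chainSup (c : Set (HomIdeal C)) (hc : IsChain (· ≤ ·) c) (hne : c.Nonempty) :
    HomIdeal C where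
  carrier x y :=
    { carrier := {f | ∃ J ∈ c, f ∈ J.carrier x y}
      zero_mem' := hne.elim fun J hJ => ⟨J, hJ, zero_mem _⟩
      add_mem' := by
        rintro f f' ⟨J, hJ, hf⟩ ⟨J', hJ', hf'⟩
        rcases hc.total hJ hJ' with hle | hle
        · exact ⟨J', hJ', add_mem (hle _ _ hf) hf'⟩
        · exact ⟨J, hJ, add_mem hf (hle _ _ hf')⟩
      neg_mem' := fun ⟨J, hJ, hf⟩ => ⟨J, hJ, neg_mem hf⟩ }
  comp_left r s := fun ⟨J, hJ, hr⟩ => ⟨J, hJ, J.comp_left r s hr⟩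
  comp_right t r := fun ⟨J, hJ, hr⟩ => ⟨J, hJ, J.comp_right t r hr⟩
  tensor_left s r := fun ⟨J, hJ, hr⟩ => ⟨J, hJ, J.tensor_left s r hr⟩
  tensor_right r s := fun ⟨J, hJ, hr⟩ => ⟨J, hJ, J.tensor_right r s hr⟩

lemma le_chainSup {c : Set (HomIdeal C)} (hc : IsChain (· ≤ ·) c) (hne : c.Nonempty)
    {J : HomIdeal C} (hJ : J ∈ c) : J ≤ chainSup c hc hne :=
  fun _ _ _ hf => ⟨J, hJ, hf⟩

lemma isProper_chainSup {c : Set (HomIdeal C)} (hc : IsChain (· ≤ ·) c) (hne : c.Nonempty)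
    (hproper : ∀ J ∈ c, IsProper J) : (chainSup c hc hne).IsProper :=
  fun g ⟨J, hJ, hg⟩ => hproper J hJ g hg

lemma exists_isMaximal_le {I : HomIdeal C} (hI : I.IsProper) : ∃ M, M.IsMaximal ∧ I ≤ M := by
  obtain ⟨M, hIM, hM⟩ := zorn_le_nonempty₀ {J : HomIdeal C | J.IsProper}
    (fun c hcS hc J hJ => ⟨chainSup c hc ⟨J, hJ⟩, isProper_chainSup hc _ hcS,
      fun _ hK => le_chainSup hc _ hK⟩) I hI
  exact ⟨M, ⟨hM.1, fun J hJ hMJ => le_antisymm (hM.2 hJ hMJ) hMJ⟩, hIM⟩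

variable (I : HomIdeal C) {g₀ h₀ : C} (r : g₀ ⟶ h₀)

def adjoinGenerators (x y : C) : Set (x ⟶ y) :=
  (I.carrier x y : Set (x ⟶ y)) ∪
    {f | ∃ (a : C) (u : x ⟶ a ⊗ g₀) (v : a ⊗ h₀ ⟶ y), f = u ≫ a ◁ r ≫ v}

lemma adjoinGenerators_comp_mem [BraidedCategory C] {l₀ h' : C} {s : h₀ ⟶ l₀}
    (hrs : r ≫ s ∈ I.carrier g₀ l₀) (e : h₀ ⊗ h' ≅ 𝟙_ C) {x y z : C} {f : x ⟶ y} {f' : y ⟶ z}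
    (hf : f ∈ I.adjoinGenerators r x y) (hf' : f' ∈ I.adjoinGenerators s y z) :
    f ≫ f' ∈ I.carrier x z := by
  obtain hf | ⟨a, u, v, rfl⟩ := hf
  · exact I.comp_left _ _ hf
  obtain hf' | ⟨a', u', v', rfl⟩ := hf'
  · exact I.comp_right _ _ hf'
  obtain ⟨w, hw⟩ := exists_whiskerRight_eq_of_iso_unit e (v ≫ u')
  have hcomp : (u ≫ a ◁ r ≫ v) ≫ u' ≫ a' ◁ s ≫ v' = u ≫ w ▷ g₀ ≫ a' ◁ (r ≫ s) ≫ v' :=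
    calc (u ≫ a ◁ r ≫ v) ≫ u' ≫ a' ◁ s ≫ v'
      _ = u ≫ (a ◁ r ≫ w ▷ h₀) ≫ a' ◁ s ≫ v' := by simp only [hw, Category.assoc]
      _ = u ≫ w ▷ g₀ ≫ a' ◁ (r ≫ s) ≫ v' := by simp [whisker_exchange_assoc]
  rw [hcomp]
  exact I.comp_right _ _ (I.comp_right _ _ (I.comp_left _ _ (I.whiskerLeft_mem a' hrs)))

variable [MonoidalPreadditive C] [BraidedCategory C]

def adjoin : HomIdeal C :=
  ofWhiskerLeft (fun x y => AddSubgroup.closure (I.adjoinGenerators r x y))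
    (fun _ s hf => by
      refine AddSubgroup.apply_mem_of_mem_closure (Preadditive.rightComp _ s) ?_ hf
      rintro f (hf | ⟨a, u, v, rfl⟩)
      · exact AddSubgroup.subset_closure (Or.inl (I.comp_left _ s hf))
      · exact AddSubgroup.subset_closure
          (Or.inr ⟨a, u, v ≫ s, by simp [Preadditive.rightComp]⟩))
    (fun t _ hf => by
      refine AddSubgroup.apply_mem_of_mem_closure (Preadditive.leftComp _ t) ?_ hf
      rintro f (hf | ⟨a, u, v, rfl⟩)
      · exact AddSubgroup.subset_closure (Or.inl (I.comp_right t _ hf))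
      · exact AddSubgroup.subset_closure
          (Or.inr ⟨a, t ≫ u, v, by simp [Preadditive.leftComp]⟩))
    (fun b _ hf => by
      refine AddSubgroup.apply_mem_of_mem_closure
        (AddMonoidHom.mk' (b ◁ ·) fun _ _ => MonoidalPreadditive.whiskerLeft_add _ _) ?_ hf
      rintro f (hf | ⟨a, u, v, rfl⟩)
      · exact AddSubgroup.subset_closure (Or.inl (I.whiskerLeft_mem b hf))
      · refine AddSubgroup.subset_closure
          (Or.inr ⟨b ⊗ a, b ◁ u ≫ (α_ b a g₀).inv, (α_ b a h₀).hom ≫ b ◁ v, ?_⟩)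
        simp)

lemma le_adjoin : I ≤ I.adjoin r :=
  fun _ _ _ hf => AddSubgroup.subset_closure (Or.inl hf)

lemma self_mem_adjoin : r ∈ (I.adjoin r).carrier g₀ h₀ :=
  AddSubgroup.subset_closure (Or.inr ⟨𝟙_ C, (λ_ g₀).inv, (λ_ h₀).hom, by simp⟩)

lemma adjoin_comp_adjoin_mem {l₀ h' : C} {s : h₀ ⟶ l₀} (hrs : r ≫ s ∈ I.carrier g₀ l₀)
    (e : h₀ ⊗ h' ≅ 𝟙_ C) {x y z : C} {f : x ⟶ y} {f' : y ⟶ z}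
    (hf : f ∈ (I.adjoin r).carrier x y) (hf' : f' ∈ (I.adjoin s).carrier y z) :
    f ≫ f' ∈ I.carrier x z := by
  refine AddSubgroup.apply_mem_of_mem_closure (Preadditive.rightComp x f') (fun q hq => ?_) hf
  exact AddSubgroup.apply_mem_of_mem_closure (Preadditive.leftComp z q)
    (fun q' hq' => I.adjoinGenerators_comp_mem r hrs e hq hq') hf'

lemma exists_id_mem_adjoin_of_isMaximal {g h : C} {r : g ⟶ h} (hI : I.IsMaximal)
    (hr : r ∉ I.carrier g h) : ∃ a : C, 𝟙 a ∈ (I.adjoin r).carrier a a := by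
  by_contra! hproper
  exact hr (hI.2 _ hproper (I.le_adjoin r) ▸ I.self_mem_adjoin r)

theorem IsMaximal.isPrime (hinv : ∀ g : C, ∃ g' : C, Nonempty (g ⊗ g' ≅ 𝟙_ C))
    {I : HomIdeal C} (hI : I.IsMaximal) : I.IsPrime := by
  refine ⟨hI.1, fun {g h l} r s hrs => ?_⟩
  by_contra! hrs'
  obtain ⟨a, ha⟩ := I.exists_id_mem_adjoin_of_isMaximal hI hrs'.1
  obtain ⟨b, hb⟩ := I.exists_id_mem_adjoin_of_isMaximal hI hrs'.2
  obtain ⟨h', ⟨e⟩⟩ := hinv h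
  have hab : 𝟙 (a ⊗ b) ∈ (I.adjoin r).carrier (a ⊗ b) (a ⊗ b) := by
    simpa using (I.adjoin r).whiskerRight_mem b ha
  have hab' : 𝟙 (a ⊗ b) ∈ (I.adjoin s).carrier (a ⊗ b) (a ⊗ b) := by
    simpa using (I.adjoin s).whiskerLeft_mem a hb
  exact hI.1 (a ⊗ b) (by simpa using I.adjoin_comp_adjoin_mem r hrs e hab hab')

end HomIdeal

/-- **Statement 8.** In a graded commutative 2-ring, every maximal element of the
poset of proper homogeneous ideals is prime, and every proper homogeneous ideal is
contained in some prime homogeneous ideal. -/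
theorem maximal_isPrime_and_le_prime
    {C : Type u} [Category.{v} C] [Preadditive C] [MonoidalCategory C]
    [SymmetricCategory C] [MonoidalPreadditive C] [GradedComm2Ring C] :
    (∀ I : HomIdeal C, I.IsProper →
      (∀ J : HomIdeal C, J.IsProper → I ≤ J → J = I) → I.IsPrime) ∧
    (∀ I : HomIdeal C, I.IsProper → ∃ p : HomIdeal C, p.IsPrime ∧ I ≤ p) := by
  have hinv := GradedComm2Ring.invertible (C := C)
  refine ⟨fun I hI hmax => HomIdeal.IsMaximal.isPrime hinv ⟨hI, hmax⟩, fun I hI => ?_⟩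
  obtain ⟨M, hM, hIM⟩ := HomIdeal.exists_isMaximal_le hI
  exact ⟨M, hM.isPrime hinv, hIM⟩
end

section
/- Let R be a graded commutative 2-ring. Then the topological space Spec R (the set of prime homogeneous ideals of R with the Zariski topology) is quasi-compact. -/
open CategoryTheory CategoryTheory.Limits CategoryTheory.MonoidalCategory

universe w v u v' u' v'' u''

section SpecDef

/-- The (homogeneous) spectrum: the set of prime homogeneous ideals. -/
def Spec (C : Type u) [Category.{v} C] [Preadditive C] [MonoidalCategory C] :=
  {p : HomIdeal C // p.IsPrime}

variable {C : Type u} [Category.{v} C] [Preadditive C] [MonoidalCategory C]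

/-- The closed set `V(I) = {p : I ⊆ p}`. -/
def zeroLocus (I : HomIdeal C) : Set (Spec C) := {p | I ≤ p.1}

/-- The basic open set `D_r = {p : r ∉ p}`. -/
def basicOpen {g h : C} (r : g ⟶ h) : Set (Spec C) := {p | r ∉ p.1.carrier g h}

/-- The Zariski topology on `Spec C`, whose closed sets are the sets `V(I)` for
homogeneous ideals `I`. -/
instance : TopologicalSpace (Spec C) :=
  TopologicalSpace.generateFrom {U : Set (Spec C) | ∃ I : HomIdeal C, U = (zeroLocus I)ᶜ}

end SpecDef

/-!
By Alexander's subbasis theorem it suffices to refine covers by the sets `V(Iᵢ)ᶜ`. Their union is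
`V(⨆ Iᵢ)ᶜ`, and `V(J)` is empty exactly when `J` contains an identity, because by Zorn's lemma a
proper ideal lies in a maximal proper one, which is prime. An identity in `⨆ Iᵢ` already lies in
a finite subsum, which gives the finite subcover.

A maximal proper `m` is prime: if `r ≫ s ∈ m` and `r ∉ m`, then `r ⊗ s ∈ m`, since the braiding
of `h ⊗ h` is an endomorphism of an invertible object, hence a scalar, and so commutes past
`h ◁ s`. Thus the colon ideal `{y | y ⊗ s ∈ m}` strictly contains `m`; by maximality it contains
an identity, hence `𝟙 (𝟙_ C)` as objects are invertible, and so `s ∈ m`.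
-/

theorem AddSubgroup.apply_mem_iSup {M N : Type*} [AddCommGroup M] [AddCommGroup N] {ι : Sort*}
    {S : ι → AddSubgroup M} {T : ι → AddSubgroup N} (f : M → N)
    (hf : ∀ x y, f (x + y) = f x + f y) (h : ∀ i, ∀ x ∈ S i, f x ∈ T i) {x : M}
    (hx : x ∈ ⨆ i, S i) : f x ∈ ⨆ i, T i := by
  have : ⨆ i, S i ≤ (⨆ i, T i).comap (AddMonoidHom.mk' f hf) :=
    iSup_le fun i y hy => AddSubgroup.mem_iSup_of_mem i (h i y hy)
  exact this hx

theorem AddSubgroup.exists_finset_of_mem_iSup {M : Type*} [AddCommGroup M] {ι : Type*}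
    {S : ι → AddSubgroup M} {x : M} (hx : x ∈ ⨆ i, S i) :
    ∃ t : Finset ι, x ∈ ⨆ i : t, S i := by
  have hdir : Directed (· ≤ ·) fun t : Finset ι => ⨆ i : t, S i :=
    Monotone.directed_le fun _ _ h => iSup_le fun i =>
      le_iSup_of_le ⟨i, Finset.mem_of_subset h i.2⟩ le_rfl
  have hle : ⨆ i, S i ≤ ⨆ t : Finset ι, ⨆ i : t, S i :=
    iSup_le fun i => le_iSup_of_le {i} (le_iSup_of_le ⟨i, Finset.mem_singleton_self i⟩ le_rfl)
  exact (AddSubgroup.mem_iSup_of_directed hdir).1 (hle hx)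

theorem exists_eq_scalar_of_tensor_iso_unit {C : Type u} [Category.{v} C] [MonoidalCategory C]
    [BraidedCategory C] {Z Z' : C} (e : Z ⊗ Z' ≅ 𝟙_ C) (φ : Z ⟶ Z) :
    ∃ u : 𝟙_ C ⟶ 𝟙_ C, φ = (λ_ Z).inv ≫ u ▷ Z ≫ (λ_ Z).hom := by
  -- `- ⊗ Z` is an autoequivalence, hence full
  let E : C ≌ C := .mk (tensorRight Z) (tensorRight Z')
    ((rightUnitorNatIso C).symm ≪≫ (curriedTensor C).flip.mapIso e.symm ≪≫
      tensorRightTensor Z Z')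
    ((tensorRightTensor Z' Z).symm ≪≫ (curriedTensor C).flip.mapIso (β_ Z' Z ≪≫ e) ≪≫
      rightUnitorNatIso C)
  obtain ⟨u, hu⟩ := E.functor.map_surjective
    ((λ_ Z).hom ≫ φ ≫ (λ_ Z).inv : (tensorRight Z).obj (𝟙_ C) ⟶ (tensorRight Z).obj (𝟙_ C))
  refine ⟨u, ?_⟩
  change u ▷ Z = _ at hu
  simp [hu]

namespace HomIdeal

section Monoidal

variable {C : Type u} [Category.{v} C] [Preadditive C] [MonoidalCategory C]

theorem id_unit_mem_of_id_mem (I : HomIdeal C) {a a' : C} (e : a ⊗ a' ≅ 𝟙_ C)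
    (ha : 𝟙 a ∈ I.carrier a a) : 𝟙 (𝟙_ C) ∈ I.carrier (𝟙_ C) (𝟙_ C) := by
  simpa using I.comp_right e.inv _ (I.comp_left _ e.hom (I.tensor_right _ (𝟙 a') ha))

theorem tensorHom_mem_of_comp_mem [BraidedCategory C] (m : HomIdeal C) {g h h' l : C}
    (e : h ⊗ h' ≅ 𝟙_ C) {r : g ⟶ h} {s : h ⟶ l} (hrs : r ≫ s ∈ m.carrier g l) :
    r ⊗ₘ s ∈ m.carrier (g ⊗ h) (h ⊗ l) := by
  let e₂ : (h ⊗ h) ⊗ (h' ⊗ h') ≅ 𝟙_ C :=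
    α_ h h (h' ⊗ h') ≪≫ whiskerLeftIso h ((α_ h h' h').symm ≪≫
      whiskerRightIso e h' ≪≫ λ_ h') ≪≫ e
  obtain ⟨u, hu⟩ := exists_eq_scalar_of_tensor_iso_unit e₂ (β_ h h).inv
  have hcomm : (β_ h h).inv ≫ h ◁ s = h ◁ s ≫ (λ_ _).inv ≫ u ▷ (h ⊗ l) ≫ (λ_ _).hom := by
    rw [hu, Category.assoc, Category.assoc, ← leftUnitor_naturality, ← whisker_exchange_assoc,
      leftUnitor_inv_naturality_assoc]
  have hrs' : r ⊗ₘ s = (β_ g h).hom ≫ (𝟙 h ⊗ₘ (r ≫ s)) ≫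
      (λ_ _).inv ≫ u ▷ (h ⊗ l) ≫ (λ_ _).hom := by
    calc r ⊗ₘ s = r ▷ h ≫ h ◁ s := tensorHom_def r s
      _ = (β_ g h).hom ≫ h ◁ r ≫ (β_ h h).inv ≫ h ◁ s := by simp
      _ = _ := by rw [hcomm]; simp
  rw [hrs']
  exact m.comp_right _ _ (m.comp_left _ _ (m.tensor_left _ _ hrs))

end Monoidal

section Preadditive

variable {C : Type u} [Category.{v} C] [Preadditive C] [MonoidalCategory C]
  [MonoidalPreadditive C]

def iSup {ι : Sort w} (I : ι → HomIdeal C) : HomIdeal C where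
  carrier g h := ⨆ i, (I i).carrier g h
  comp_left _ s hr := AddSubgroup.apply_mem_iSup (· ≫ s) (fun _ _ => Preadditive.add_comp ..)
    (fun i x hx => (I i).comp_left x s hx) hr
  comp_right t _ hr := AddSubgroup.apply_mem_iSup (t ≫ ·) (fun _ _ => Preadditive.comp_add ..)
    (fun i x hx => (I i).comp_right t x hx) hr
  tensor_left s _ hr := AddSubgroup.apply_mem_iSup (s ⊗ₘ ·)
    (fun _ _ => MonoidalPreadditive.tensor_add ..) (fun i x hx => (I i).tensor_left s x hx) hr
  tensor_right _ s hr := AddSubgroup.apply_mem_iSup (· ⊗ₘ s)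
    (fun _ _ => MonoidalPreadditive.add_tensor ..) (fun i x hx => (I i).tensor_right x s hx) hr

theorem le_iSup {ι : Sort w} (I : ι → HomIdeal C) (i : ι) : I i ≤ iSup I :=
  fun g h => _root_.le_iSup (fun j => (I j).carrier g h) i

theorem iSup_le {ι : Sort w} {I : ι → HomIdeal C} {J : HomIdeal C} (h : ∀ i, I i ≤ J) :
    iSup I ≤ J :=
  fun g g' => _root_.iSup_le fun i => h i g g'

theorem zeroLocus_iSup {ι : Sort w} (I : ι → HomIdeal C) :
    zeroLocus (iSup I) = ⋂ i, zeroLocus (I i) := by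
  ext p
  simpa [zeroLocus] using ⟨fun h i => (le_iSup I i).trans h, iSup_le⟩

theorem exists_finset_not_isProper_iSup {ι : Type w} {I : ι → HomIdeal C}
    (hI : ¬ (iSup I).IsProper) : ∃ t : Finset ι, ¬ (iSup fun i : t => I i).IsProper := by
  obtain ⟨a, ha⟩ := not_forall_not.1 hI
  obtain ⟨t, ht⟩ := AddSubgroup.exists_finset_of_mem_iSup ha
  exact ⟨t, fun h => h a ht⟩

theorem exists_maximal_isProper {I : HomIdeal C} (hI : I.IsProper) :
    ∃ m, I ≤ m ∧ Maximal IsProper m := by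
  refine zorn_le_nonempty₀ {J : HomIdeal C | J.IsProper} (fun c hc hchain J hJ => ?_) I hI
  have : Nonempty c := ⟨⟨J, hJ⟩⟩
  refine ⟨iSup (Subtype.val : c → HomIdeal C), fun a ha => ?_,
    fun K hK => le_iSup (Subtype.val : c → HomIdeal C) ⟨K, hK⟩⟩
  have hdir : Directed (· ≤ ·) fun K : c => K.1.carrier a a :=
    hchain.directedOn.directed_val.mono_comp _ fun _ _ h => h a a
  obtain ⟨K, hK⟩ := (AddSubgroup.mem_iSup_of_directed hdir).1 ha
  exact hc K.2 a hK

end Preadditive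

section Braided

variable {C : Type u} [Category.{v} C] [Preadditive C] [MonoidalCategory C]
  [MonoidalPreadditive C] [BraidedCategory C]

def colon (m : HomIdeal C) {h l : C} (s : h ⟶ l) : HomIdeal C where
  carrier a b := (m.carrier (a ⊗ h) (b ⊗ l)).comap
    (AddMonoidHom.mk' (· ⊗ₘ s) fun _ _ => MonoidalPreadditive.add_tensor ..)
  comp_left y d hy := by
    have hyd : (y ≫ d) ⊗ₘ s = (y ⊗ₘ s) ≫ (d ⊗ₘ 𝟙 l) := by
      rw [tensorHom_comp_tensorHom, Category.comp_id]
    show (y ≫ d) ⊗ₘ s ∈ m.carrier _ _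
    exact hyd ▸ m.comp_left _ _ hy
  comp_right t y hy := by
    have hty : (t ≫ y) ⊗ₘ s = (t ⊗ₘ 𝟙 h) ≫ (y ⊗ₘ s) := by
      rw [tensorHom_comp_tensorHom, Category.id_comp]
    show (t ≫ y) ⊗ₘ s ∈ m.carrier _ _
    exact hty ▸ m.comp_right _ _ hy
  tensor_left x y hy := by
    have hxy : (x ⊗ₘ y) ⊗ₘ s = (α_ _ _ _).hom ≫ (x ⊗ₘ (y ⊗ₘ s)) ≫ (α_ _ _ _).inv := by
      rw [← associator_naturality_assoc, Iso.hom_inv_id, Category.comp_id]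
    show (x ⊗ₘ y) ⊗ₘ s ∈ m.carrier _ _
    exact hxy ▸ m.comp_right _ _ (m.comp_left _ _ (m.tensor_left x _ hy))
  tensor_right {a b a' b'} y x hy := by
    have hyx : (y ⊗ₘ x) ⊗ₘ s = ((α_ a a' h).hom ≫ a ◁ (β_ a' h).hom ≫ (α_ a h a').inv) ≫
        ((y ⊗ₘ s) ⊗ₘ x) ≫ ((α_ b l b').hom ≫ b ◁ (β_ b' l).inv ≫ (α_ b b' l).inv) := by
      simp only [Category.assoc, ← associator_inv_naturality_assoc, Iso.inv_hom_id_assoc,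
        ← id_tensorHom, tensorHom_comp_tensorHom_assoc, Category.id_comp, Category.comp_id,
        ← BraidedCategory.braiding_naturality_assoc, Iso.hom_inv_id, ← associator_naturality_assoc]
    show (y ⊗ₘ x) ⊗ₘ s ∈ m.carrier _ _
    exact hyx ▸ m.comp_right _ _ (m.comp_left _ _ (m.tensor_right _ x hy))

theorem le_colon (m : HomIdeal C) {h l : C} (s : h ⟶ l) : m ≤ m.colon s :=
  fun _ _ y hy => m.tensor_right y s hy

theorem isPrime_of_maximal (hinv : ∀ g : C, ∃ g' : C, Nonempty (g ⊗ g' ≅ 𝟙_ C))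
    {m : HomIdeal C} (hm : Maximal IsProper m) : m.IsPrime := by
  refine ⟨hm.prop, fun {g h l} r s hrs => or_iff_not_imp_left.2 fun hr => ?_⟩
  obtain ⟨h', ⟨e⟩⟩ := hinv h
  have hcolon : ¬ (m.colon s).IsProper := fun hprop =>
    hr (hm.2 hprop (m.le_colon s) g h (m.tensorHom_mem_of_comp_mem e hrs))
  obtain ⟨a, ha⟩ := not_forall_not.1 hcolon
  obtain ⟨a', ⟨e'⟩⟩ := hinv a
  have hs : 𝟙 (𝟙_ C) ⊗ₘ s ∈ m.carrier _ _ := (m.colon s).id_unit_mem_of_id_mem e' ha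
  simpa using m.comp_right (λ_ h).inv _ (m.comp_left _ (λ_ l).hom hs)

theorem exists_le_isPrime (hinv : ∀ g : C, ∃ g' : C, Nonempty (g ⊗ g' ≅ 𝟙_ C))
    {I : HomIdeal C} (hI : I.IsProper) : ∃ p, I ≤ p ∧ p.IsPrime :=
  let ⟨m, hIm, hm⟩ := exists_maximal_isProper hI
  ⟨m, hIm, isPrime_of_maximal hinv hm⟩

theorem zeroLocus_eq_empty_iff (hinv : ∀ g : C, ∃ g' : C, Nonempty (g ⊗ g' ≅ 𝟙_ C))
    {I : HomIdeal C} : zeroLocus I = ∅ ↔ ¬ I.IsProper := by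
  refine ⟨fun h hI => ?_, fun hI => Set.eq_empty_of_forall_notMem fun p hp => ?_⟩
  · obtain ⟨p, hIp, hp⟩ := exists_le_isPrime hinv hI
    exact (Set.eq_empty_iff_forall_notMem.1 h) ⟨p, hp⟩ hIp
  · obtain ⟨a, ha⟩ := not_forall_not.1 hI
    exact p.2.isProper a (hp a a ha)

end Braided

end HomIdeal

/-- **Statement 10.** The spectrum of a graded commutative 2-ring, endowed with the
Zariski topology, is quasi-compact. -/
theorem spec_compactSpace
    {C : Type u} [Category.{v} C] [Preadditive C] [MonoidalCategory C]
    [SymmetricCategory C] [MonoidalPreadditive C] [GradedComm2Ring C] :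
    CompactSpace (Spec C) := by
  refine compactSpace_generateFrom' rfl fun ι U hU => ?_
  choose I hI using fun i => (U i).2
  have hinv := GradedComm2Ring.invertible (C := C)
  have hcover : ¬ (HomIdeal.iSup I).IsProper := by
    rw [← HomIdeal.zeroLocus_eq_empty_iff hinv, HomIdeal.zeroLocus_iSup,
      ← Set.compl_univ_iff, Set.compl_iInter, ← hU]
    simp only [hI]
  obtain ⟨t, ht⟩ := HomIdeal.exists_finset_not_isProper_iSup hcover
  refine ⟨t, t.finite_toSet, ?_⟩
  rw [← HomIdeal.zeroLocus_eq_empty_iff hinv, HomIdeal.zeroLocus_iSup,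
    ← Set.compl_univ_iff, Set.compl_iInter] at ht
  simpa [hI, Set.iUnion_subtype] using ht
end

section
/- Let S be a homogeneous multiplicative system in a graded commutative 2-ring R. Then S satisfies both a left and a right calculus of fractions in R. In particular: (left Ore condition) for morphisms r : g → h and s : g → ℓ with s ∈ S there exist s' : h → m in S and r' : ℓ → m with s' ∘ r = r' ∘ s; (left cancellation) for r, t : g → h and s : h → ℓ in S with s ∘ r = s ∘ t there exists s' : m → g in S with r ∘ s' = t ∘ s'; and the analogous right-handed conditions hold. -/
open CategoryTheory CategoryTheory.Limits CategoryTheory.MonoidalCategory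

universe w v u v' u' v'' u''

section MulSysDef

variable {C : Type u} [Category.{v} C] [MonoidalCategory C]

/-- A *homogeneous multiplicative system*: a class of morphisms containing all
isomorphisms and closed under composition and under taking translates. -/
structure IsHomMulSystem (S : MorphismProperty C) : Prop where
  iso_mem : ∀ {g h : C} (f : g ⟶ h), IsIso f → S f
  comp_mem : ∀ {g h l : C} (f : g ⟶ h) (f' : h ⟶ l), S f → S f' → S (f ≫ f')
  translate_mem : ∀ {g h g' h' : C} (f : g ⟶ h) (f' : g' ⟶ h'),
      S f → Translate f f' → S f'

end MulSysDef

section ZigAux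

variable {C : Type u} [Category.{v} C] [MonoidalCategory C]

lemma zigA_of_zig {a a' : C} (ε : a ⊗ a' ≅ 𝟙_ C) (η : 𝟙_ C ≅ a' ⊗ a)
    (zig : (ρ_ a).inv ≫ (a ◁ η.hom) ≫ (α_ a a' a).inv ≫ (ε.hom ▷ a) ≫ (λ_ a).hom = 𝟙 a) :
    (ρ_ a).inv ≫ (a ◁ η.hom) = (λ_ a).inv ≫ (ε.inv ▷ a) ≫ (α_ a a' a).hom := by
  rw [← cancel_mono ((α_ a a' a).inv ≫ (ε.hom ▷ a) ≫ (λ_ a).hom)]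
  simpa using zig

lemma zigB_of_zig {a a' : C} (ε : a ⊗ a' ≅ 𝟙_ C) (η : 𝟙_ C ≅ a' ⊗ a)
    (zig : (ρ_ a).inv ≫ (a ◁ η.hom) ≫ (α_ a a' a).inv ≫ (ε.hom ▷ a) ≫ (λ_ a).hom = 𝟙 a) :
    (a ◁ η.inv) ≫ (ρ_ a).hom = (α_ a a' a).inv ≫ (ε.hom ▷ a) ≫ (λ_ a).hom := by
  rw [← cancel_epi ((ρ_ a).inv ≫ (a ◁ η.hom))]
  simpa using zig.symm

end ZigAux

section KeyLemmas

variable {C : Type u} [Category.{v} C] [Preadditive C] [MonoidalCategory C]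
    [SymmetricCategory C] [MonoidalPreadditive C] [GradedComm2Ring C]

/-- Every object of a graded commutative 2-ring admits a dual datum satisfying one
of the triangle identities. -/
lemma exists_dualData (a : C) :
    ∃ (a' : C) (ε : a ⊗ a' ≅ 𝟙_ C) (η : 𝟙_ C ≅ a' ⊗ a),
      (ρ_ a).inv ≫ (a ◁ η.hom) ≫ (α_ a a' a).inv ≫ (ε.hom ▷ a) ≫ (λ_ a).hom = 𝟙 a := by
  obtain ⟨a', ⟨e⟩⟩ := GradedComm2Ring.invertible a
  let η₀ : 𝟙_ C ≅ a' ⊗ a := e.symm ≪≫ β_ a a'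
  let φ : a ≅ a := (ρ_ a).symm ≪≫ whiskerLeftIso a η₀ ≪≫ (α_ a a' a).symm ≪≫
    whiskerRightIso e a ≪≫ λ_ a
  refine ⟨a', e, η₀ ≪≫ whiskerLeftIso a' φ.symm, ?_⟩
  simp only [Iso.trans_hom, whiskerLeftIso_hom, Iso.symm_hom,
    MonoidalCategory.whiskerLeft_comp, Category.assoc]
  rw [associator_inv_naturality_right_assoc a a' φ.inv,
    whisker_exchange_assoc e.hom φ.inv, leftUnitor_naturality φ.inv]
  have hφ := φ.hom_inv_id
  simp only [φ, Iso.trans_hom, Iso.symm_hom, whiskerLeftIso_hom, whiskerRightIso_hom,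
    Category.assoc] at hφ
  exact hφ

variable {S : MorphismProperty C}

/-- The left Ore condition. -/
lemma hms_leftOre (hS : IsHomMulSystem S) {g h l : C} (r : g ⟶ h) (s : g ⟶ l) (hs : S s) :
    ∃ (m : C) (s' : h ⟶ m) (r' : l ⟶ m), S s' ∧ r ≫ s' = s ≫ r' := by
  obtain ⟨g', ε, η, zig⟩ := exists_dualData g
  refine ⟨h ⊗ (g' ⊗ l), (ρ_ h).inv ≫ (h ◁ (η.hom ≫ g' ◁ s)),
    (λ_ l).inv ≫ (ε.inv ▷ l) ≫ ((r ▷ g') ▷ l) ≫ (α_ h g' l).hom, ?_, ?_⟩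
  · exact hS.translate_mem s _ hs
      (.compIsoRight (ρ_ h).symm (.whiskerLeft h (.compIsoRight η (.whiskerLeft g' (.refl s)))))
  · have zigA := zigA_of_zig ε η zig
    conv_lhs =>
      rw [rightUnitor_inv_naturality_assoc r, ← whisker_exchange r (η.hom ≫ g' ◁ s)]
    conv_rhs =>
      rw [leftUnitor_inv_naturality_assoc s, whisker_exchange_assoc ε.inv s,
        whisker_exchange_assoc (r ▷ g') s, associator_naturality_right h g' s,
        associator_naturality_left_assoc r g' g, ← whisker_exchange r (g' ◁ s)]
    simp only [MonoidalCategory.whiskerLeft_comp, Category.assoc]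
    rw [reassoc_of% zigA]

/-- The right Ore condition. -/
lemma hms_rightOre (hS : IsHomMulSystem S) {g h l : C} (r : g ⟶ h) (s : l ⟶ h) (hs : S s) :
    ∃ (m : C) (s' : m ⟶ g) (r' : m ⟶ l), S s' ∧ s' ≫ r = r' ≫ s := by
  obtain ⟨h', ε, η, zig⟩ := exists_dualData h
  refine ⟨g ⊗ (h' ⊗ l), (g ◁ ((h' ◁ s) ≫ η.inv)) ≫ (ρ_ g).hom,
    (r ▷ (h' ⊗ l)) ≫ (α_ h h' l).inv ≫ (ε.hom ▷ l) ≫ (λ_ l).hom, ?_, ?_⟩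
  · exact hS.translate_mem s _ hs
      (.compIsoLeft (ρ_ g) (.whiskerLeft g (.compIsoLeft η.symm (.whiskerLeft h' (.refl s)))))
  · have zigB := zigB_of_zig ε η zig
    conv_lhs =>
      rw [Category.assoc, ← rightUnitor_naturality r,
        whisker_exchange_assoc r ((h' ◁ s) ≫ η.inv)]
    conv_rhs =>
      simp only [Category.assoc]
      rw [← leftUnitor_naturality s, ← whisker_exchange_assoc ε.hom s,
        ← associator_inv_naturality_right_assoc h h' s]
    simp only [MonoidalCategory.whiskerLeft_comp, Category.assoc, zigB]

/-- The right cancellation condition. -/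
lemma hms_rightCancel (hS : IsHomMulSystem S) {g h l : C} (r t : g ⟶ h) (s : h ⟶ l) (hs : S s)
    (hrt : r ≫ s = t ≫ s) :
    ∃ (m : C) (s' : m ⟶ g), S s' ∧ s' ≫ r = s' ≫ t := by
  set u : g ⟶ h := r - t with hu_def
  have hu : u ≫ s = 0 := by rw [Preadditive.sub_comp, sub_eq_zero]; exact hrt
  obtain ⟨h', ε, η, zig⟩ := exists_dualData h
  have k0 : u ≫ s =
      u ≫ ((ρ_ h).inv ≫ (h ◁ η.hom) ≫ (α_ h h' h).inv ≫ (ε.hom ▷ h) ≫ (λ_ h).hom) ≫ s := by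
    rw [zig]; simp
  simp only [Category.assoc] at k0
  rw [rightUnitor_inv_naturality_assoc u, ← whisker_exchange_assoc u η.hom,
    associator_inv_naturality_left_assoc u h' h, ← leftUnitor_naturality s,
    ← whisker_exchange_assoc ε.hom s, ← whisker_exchange_assoc (u ▷ h') s] at k0
  have k1 : ((u ▷ h') ▷ l : (g ⊗ h') ⊗ l ⟶ _) =
      (α_ g h' l).hom ≫ (u ▷ (h' ⊗ l)) ≫ (α_ h h' l).inv := by
    rw [← associator_naturality_left_assoc u h' l]; simp
  rw [k1] at k0
  have hM : ((g ⊗ h') ◁ s) ≫ (α_ g h' l).hom ≫ (u ▷ (h' ⊗ l)) = 0 := by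
    have h0 := k0.symm.trans hu
    rw [← cancel_mono ((α_ h h' l).inv ≫ (ε.hom ▷ l) ≫ (λ_ l).hom),
      ← cancel_epi ((ρ_ g).inv ≫ (g ◁ η.hom) ≫ (α_ g h' h).inv)]
    simpa using h0
  have hM' : ((g ⊗ h') ◁ s) ≫ (α_ g h' l).hom ≫ (β_ g (h' ⊗ l)).hom ≫ ((h' ⊗ l) ◁ u)
      = 0 := by
    rw [← BraidedCategory.braiding_naturality_left u (h' ⊗ l), reassoc_of% hM]
    simp
  obtain ⟨X1, ⟨e1⟩⟩ := GradedComm2Ring.invertible (h' ⊗ l)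
  let w : X1 ⊗ (h' ⊗ l) ≅ 𝟙_ C := β_ X1 (h' ⊗ l) ≪≫ e1
  refine ⟨X1 ⊗ ((g ⊗ h') ⊗ h),
    (X1 ◁ ((((g ⊗ h') ◁ s) ≫ (α_ g h' l).hom) ≫ (β_ g (h' ⊗ l)).hom)) ≫
      ((α_ X1 (h' ⊗ l) g).symm ≪≫ whiskerRightIso w g ≪≫ λ_ g).hom, ?_, ?_⟩
  · exact hS.translate_mem s _ hs
      (.compIsoLeft ((α_ X1 (h' ⊗ l) g).symm ≪≫ whiskerRightIso w g ≪≫ λ_ g)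
        (.whiskerLeft X1 (.compIsoLeft (β_ g (h' ⊗ l))
          (.compIsoLeft (α_ g h' l) (.whiskerLeft (g ⊗ h') (.refl s))))))
  · have hM2 := congrArg (fun q => X1 ◁ q) hM'
    simp only [MonoidalCategory.whiskerLeft_comp, Category.assoc,
      MonoidalPreadditive.whiskerLeft_zero] at hM2
    rw [← sub_eq_zero, ← Preadditive.comp_sub, ← hu_def]
    simp only [Iso.trans_hom, Iso.symm_hom, whiskerRightIso_hom, Category.assoc]
    rw [← leftUnitor_naturality u, ← whisker_exchange_assoc w.hom u,
      ← associator_inv_naturality_right_assoc X1 (h' ⊗ l) u]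
    simp only [MonoidalCategory.whiskerLeft_comp, Category.assoc]
    rw [reassoc_of% hM2]
    simp

/-- The left cancellation condition. -/
lemma hms_leftCancel (hS : IsHomMulSystem S) {g h l : C} (r t : g ⟶ h) (s : l ⟶ g) (hs : S s)
    (hrt : s ≫ r = s ≫ t) :
    ∃ (m : C) (s' : h ⟶ m), S s' ∧ r ≫ s' = t ≫ s' := by
  set u : g ⟶ h := r - t with hu_def
  have hu : s ≫ u = 0 := by rw [Preadditive.comp_sub, sub_eq_zero]; exact hrt
  obtain ⟨g', ε, η, zig⟩ := exists_dualData g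
  have k0 : s ≫ u =
      s ≫ ((ρ_ g).inv ≫ (g ◁ η.hom) ≫ (α_ g g' g).inv ≫ (ε.hom ▷ g) ≫ (λ_ g).hom) ≫ u := by
    rw [zig]; simp
  simp only [Category.assoc] at k0
  rw [rightUnitor_inv_naturality_assoc s, ← whisker_exchange_assoc s η.hom,
    associator_inv_naturality_left_assoc s g' g, ← leftUnitor_naturality u,
    ← whisker_exchange_assoc ε.hom u, ← whisker_exchange_assoc (s ▷ g') u] at k0
  have hN : ((l ⊗ g') ◁ u) ≫ ((s ▷ g') ▷ h) = 0 := by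
    have h0 := k0.symm.trans hu
    rw [← cancel_mono ((ε.hom ▷ h) ≫ (λ_ h).hom),
      ← cancel_epi ((ρ_ l).inv ≫ (l ◁ η.hom) ≫ (α_ l g' g).inv)]
    simpa using h0
  obtain ⟨Y1, ⟨e1⟩⟩ := GradedComm2Ring.invertible (l ⊗ g')
  let w : Y1 ⊗ (l ⊗ g') ≅ 𝟙_ C := β_ Y1 (l ⊗ g') ≪≫ e1
  refine ⟨Y1 ⊗ ((g ⊗ g') ⊗ h),
    ((λ_ h).symm ≪≫ whiskerRightIso w.symm h ≪≫ α_ Y1 (l ⊗ g') h).hom ≫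
      (Y1 ◁ ((s ▷ g') ▷ h)), ?_, ?_⟩
  · exact hS.translate_mem s _ hs
      (.compIsoRight ((λ_ h).symm ≪≫ whiskerRightIso w.symm h ≪≫ α_ Y1 (l ⊗ g') h)
        (.whiskerLeft Y1 (.whiskerRight h (.whiskerRight g' (.refl s)))))
  · rw [← sub_eq_zero, ← Preadditive.sub_comp, ← hu_def]
    simp only [Iso.trans_hom, Iso.symm_hom, whiskerRightIso_hom, Category.assoc]
    rw [leftUnitor_inv_naturality_assoc u, whisker_exchange_assoc w.inv u,
      associator_naturality_right_assoc Y1 (l ⊗ g') u,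
      ← MonoidalCategory.whiskerLeft_comp, hN]
    simp

end KeyLemmas

/-- **Statement 13.** Every homogeneous multiplicative system in a graded commutative
2-ring satisfies both a left and a right calculus of fractions; in particular the
left/right Ore conditions and the left/right cancellation conditions hold. -/
theorem homMulSystem_hasCalculusOfFractions
    {C : Type u} [Category.{v} C] [Preadditive C] [MonoidalCategory C]
    [SymmetricCategory C] [MonoidalPreadditive C] [GradedComm2Ring C]
    (S : MorphismProperty C) (hS : IsHomMulSystem S) :
    S.HasLeftCalculusOfFractions ∧
    S.HasRightCalculusOfFractions ∧
    (∀ {g h l : C} (r : g ⟶ h) (s : g ⟶ l), S s →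
      ∃ (m : C) (s' : h ⟶ m) (r' : l ⟶ m), S s' ∧ r ≫ s' = s ≫ r') ∧
    (∀ {g h l : C} (r t : g ⟶ h) (s : h ⟶ l), S s → r ≫ s = t ≫ s →
      ∃ (m : C) (s' : m ⟶ g), S s' ∧ s' ≫ r = s' ≫ t) ∧
    (∀ {g h l : C} (r : g ⟶ h) (s : l ⟶ h), S s →
      ∃ (m : C) (s' : m ⟶ g) (r' : m ⟶ l), S s' ∧ s' ≫ r = r' ≫ s) ∧
    (∀ {g h l : C} (r t : g ⟶ h) (s : l ⟶ g), S s → s ≫ r = s ≫ t →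
      ∃ (m : C) (s' : h ⟶ m), S s' ∧ r ≫ s' = t ≫ s') := by
  have mult : S.IsMultiplicative :=
    { id_mem := fun X => hS.iso_mem _ inferInstance
      comp_mem := fun f g hf hg => hS.comp_mem f g hf hg }
  refine ⟨?_, ?_, fun r s hs => hms_leftOre hS r s hs,
    fun r t s hs hrt => hms_rightCancel hS r t s hs hrt,
    fun r s hs => hms_rightOre hS r s hs,
    fun r t s hs hrt => hms_leftCancel hS r t s hs hrt⟩
  · exact
      { toIsMultiplicative := mult
        exists_leftFraction := fun X Y φ => by
          obtain ⟨m, s', r', hs', heq⟩ := hms_leftOre hS φ.f φ.s φ.hs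
          exact ⟨MorphismProperty.LeftFraction.mk r' s' hs', heq⟩
        ext := fun X' X Y f₁ f₂ s hs heq => by
          obtain ⟨m, s', hs', h⟩ := hms_leftCancel hS f₁ f₂ s hs heq
          exact ⟨m, s', hs', h⟩ }
  · exact
      { toIsMultiplicative := mult
        exists_rightFraction := fun X Y φ => by
          obtain ⟨m, s', r', hs', heq⟩ := hms_rightOre hS φ.f φ.s φ.hs
          exact ⟨MorphismProperty.RightFraction.mk s' hs' r', heq⟩
        ext := fun X Y Y' f₁ f₂ s hs heq => by
          obtain ⟨m, s', hs', h⟩ := hms_rightCancel hS f₁ f₂ s hs heq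
          exact ⟨m, s', hs', h⟩ }
end

section
/- Let S be a homogeneous multiplicative system in a graded commutative 2-ring R and let p be a prime homogeneous ideal of R with p ∩ S = ∅. Then the collection of left fractions S⁻¹p := {s⁻¹ ∘ r : s ∈ S, r ∈ p} is a prime homogeneous ideal of the localization S⁻¹R. Moreover, for an arbitrary homogeneous ideal I of R, the collection S⁻¹I := {s⁻¹ ∘ r : s ∈ S, r ∈ I} is a homogeneous ideal of S⁻¹R, and every homogeneous ideal J of S⁻¹R satisfies J = S⁻¹(loc⁻¹ J), where loc : R → S⁻¹R is the localization functor. -/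
open CategoryTheory CategoryTheory.Limits CategoryTheory.MonoidalCategory

universe w v u v' u' v'' u''

/-!
Tensoring with an invertible object is an autoequivalence, so translates of a morphism behave
like central elements: for `s : g ⟶ x` and `f : g ⟶ l` the interchange law, conjugated by
`g ⊗ g⁻¹ ≅ 𝟙`, gives a square `f ≫ t = s ≫ f'` with `t` a translate of `s` and `f'` one of `f`;
and routing `s` and `h` through the unit shows that `s ≫ h = 0` forces `h ≫ t = 0` for a
translate `t` of `s`. So a homogeneous multiplicative system admits a calculus of left fractions,
and the same squares show that the fractions `s⁻¹ ∘ r` with `r ∈ I` are closed under sums,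
composition and tensoring. Every object of the localization is isomorphic to one coming from `C`,
so these fractions determine an ideal there. For a prime `p` disjoint from `S`, a morphism
`loc r` is a fraction of `p` only if `r ∈ p`; writing the factors of a composite as fractions
reduces primality of `S⁻¹p` to primality of `p`.
-/

namespace Translate

variable {C : Type u} [Category.{v} C] [MonoidalCategory C]

theorem trans {g h g' h' g'' h'' : C} {r : g ⟶ h} {r' : g' ⟶ h'} {r'' : g'' ⟶ h''}
    (h₁ : Translate r r') (h₂ : Translate r' r'') : Translate r r'' := by
  induction h₂ with
  | refl => exact h₁
  | whiskerLeft ℓ _ ih => exact .whiskerLeft ℓ (ih h₁)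
  | whiskerRight ℓ _ ih => exact .whiskerRight ℓ (ih h₁)
  | compIsoLeft u _ ih => exact .compIsoLeft u (ih h₁)
  | compIsoRight u _ ih => exact .compIsoRight u (ih h₁)

end Translate

theorem HomIdeal.translate_mem {C : Type u} [Category.{v} C] [Preadditive C] [MonoidalCategory C]
    (I : HomIdeal C) {g h g' h' : C} {r : g ⟶ h} {r' : g' ⟶ h'} (ht : Translate r r')
    (hr : r ∈ I.carrier g h) : r' ∈ I.carrier g' h' := by
  induction ht with
  | refl => exact hr
  | whiskerLeft ℓ _ ih => simpa using I.tensor_left (𝟙 ℓ) _ (ih hr)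
  | whiskerRight ℓ _ ih => simpa using I.tensor_right _ (𝟙 ℓ) (ih hr)
  | compIsoLeft u _ ih => exact I.comp_left _ _ (ih hr)
  | compIsoRight u _ ih => exact I.comp_right _ _ (ih hr)

section Monoidal

variable {C : Type u} [Category.{v} C] [MonoidalCategory C]

def fullyFaithfulTensorLeftOfIso {g g' : C} (e : g ⊗ g' ≅ 𝟙_ C) (e' : g' ⊗ g ≅ 𝟙_ C) :
    (tensorLeft g).FullyFaithful :=
  (CategoryTheory.Equivalence.mk (tensorLeft g) (tensorLeft g')
    ((leftUnitorNatIso C).symm ≪≫ (tensoringLeft C).mapIso e'.symm ≪≫ tensorLeftTensor g' g)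
    ((tensorLeftTensor g g').symm ≪≫ (tensoringLeft C).mapIso e ≪≫ leftUnitorNatIso C)
  ).fullyFaithfulFunctor

theorem whiskerLeft_comp_whiskerRight_of_unit {A B : C} (p : A ⟶ 𝟙_ C) (q : 𝟙_ C ⟶ B) :
    A ◁ q ≫ p ▷ B = (ρ_ A).hom ≫ (p ≫ q) ≫ (λ_ B).inv := by
  rw [whisker_exchange, whiskerRight_id, id_whiskerLeft]
  simp [unitors_equal]

theorem exists_translate_comp_eq_zero_of_whiskerLeft_comp [Preadditive C]
    [MonoidalPreadditive C] {W W' x y z : C} (u : W' ⊗ W ≅ 𝟙_ C) {h : x ⟶ y}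
    {k : W ⊗ y ⟶ z} (hk : W ◁ h ≫ k = 0) :
    ∃ (z' : C) (t : y ⟶ z'), Translate k t ∧ h ≫ t = 0 := by
  refine ⟨_, ((λ_ y).symm ≪≫ whiskerRightIso u.symm y ≪≫ α_ W' W y).hom ≫ W' ◁ k,
    .compIsoRight _ (.whiskerLeft _ (.refl k)), ?_⟩
  simp only [Iso.trans_hom, Iso.symm_hom, whiskerRightIso_hom, Category.assoc]
  rw [leftUnitor_inv_naturality_assoc, whisker_exchange_assoc, associator_naturality_right_assoc,
    ← MonoidalCategory.whiskerLeft_comp, hk, MonoidalPreadditive.whiskerLeft_zero, comp_zero,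
    comp_zero, comp_zero]

end Monoidal

namespace GradedComm2Ring

variable {C : Type u} [Category.{v} C] [Preadditive C] [MonoidalCategory C]
    [SymmetricCategory C] [MonoidalPreadditive C] [GradedComm2Ring C]

theorem invertible_left (g : C) : ∃ g' : C, Nonempty (g' ⊗ g ≅ 𝟙_ C) :=
  let ⟨g', ⟨e⟩⟩ := invertible g
  ⟨g', ⟨β_ g' g ≪≫ e⟩⟩

theorem exists_translate_square {g x l : C} (s : g ⟶ x) (f : g ⟶ l) :
    ∃ (m : C) (t : l ⟶ m) (f' : x ⟶ m), Translate s t ∧ Translate f f' ∧ f ≫ t = s ≫ f' := by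
  obtain ⟨g', ⟨e⟩⟩ := invertible g
  let hF := fullyFaithfulTensorLeftOfIso e (β_ g' g ≪≫ e)
  -- a unit satisfying the zigzag identity with `e`, obtained by full faithfulness of `g ◁ -`
  let ν : 𝟙_ C ≅ g' ⊗ g :=
    hF.preimageIso ((ρ_ g) ≪≫ (λ_ g).symm ≪≫ whiskerRightIso e.symm g ≪≫ α_ g g' g)
  have hν : (ρ_ g).inv ≫ g ◁ ν.hom = (λ_ g).inv ≫ e.inv ▷ g ≫ (α_ g g' g).hom := by
    have : g ◁ ν.hom = _ := hF.map_preimage _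
    simp [this]
  refine ⟨l ⊗ (g' ⊗ x), (ρ_ l).inv ≫ l ◁ (ν.hom ≫ g' ◁ s),
    ((λ_ x).inv ≫ (e.inv ≫ f ▷ g') ▷ x) ≫ (α_ l g' x).hom,
    .compIsoRight (ρ_ l).symm (.whiskerLeft l (.compIsoRight ν (.whiskerLeft g' (.refl s)))),
    .compIsoLeft (α_ l g' x) (.compIsoRight (λ_ x).symm
      (.whiskerRight x (.compIsoRight e.symm (.whiskerRight g' (.refl f))))), ?_⟩
  have lhs : f ≫ (ρ_ l).inv ≫ l ◁ (ν.hom ≫ g' ◁ s) =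
      (ρ_ g).inv ≫ g ◁ ν.hom ≫ g ◁ g' ◁ s ≫ f ▷ (g' ⊗ x) := by
    rw [rightUnitor_inv_naturality_assoc, MonoidalCategory.whiskerLeft_comp,
      ← whisker_exchange_assoc, ← whisker_exchange]
  have rhs : s ≫ ((λ_ x).inv ≫ (e.inv ≫ f ▷ g') ▷ x) ≫ (α_ l g' x).hom =
      (λ_ g).inv ≫ e.inv ▷ g ≫ (α_ g g' g).hom ≫ g ◁ g' ◁ s ≫ f ▷ (g' ⊗ x) := by
    simp only [comp_whiskerRight, Category.assoc]
    rw [leftUnitor_inv_naturality_assoc, whisker_exchange_assoc, whisker_exchange_assoc,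
      associator_naturality_right, associator_naturality_left_assoc, ← whisker_exchange]
  rw [lhs, rhs, reassoc_of% hν]

theorem exists_translate_comp_eq_zero {g x y : C} (s : g ⟶ x) (h : x ⟶ y) (hsh : s ≫ h = 0) :
    ∃ (z : C) (t : y ⟶ z), Translate s t ∧ h ≫ t = 0 := by
  obtain ⟨x', ⟨e⟩⟩ := invertible x
  let u : x' ⊗ x ≅ 𝟙_ C := β_ x' x ≪≫ e
  obtain ⟨_, ⟨v⟩⟩ := invertible_left (x' ⊗ g)
  have key : (x' ⊗ g) ◁ (x' ◁ h) ≫ (x' ◁ s ≫ u.hom) ▷ (x' ⊗ y) = 0 := by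
    have := whiskerLeft_comp_whiskerRight_of_unit (x' ◁ s ≫ u.hom) (u.inv ≫ x' ◁ h)
    simp only [Category.assoc, Iso.hom_inv_id_assoc, ← MonoidalCategory.whiskerLeft_comp_assoc,
      hsh, MonoidalPreadditive.whiskerLeft_zero, zero_comp, comp_zero] at this
    rw [MonoidalCategory.whiskerLeft_comp, Category.assoc] at this
    exact (cancel_epi _).1 (this.trans (comp_zero).symm)
  obtain ⟨_, t₁, ht₁, h₁⟩ := exists_translate_comp_eq_zero_of_whiskerLeft_comp v key
  obtain ⟨_, t₂, ht₂, h₂⟩ := exists_translate_comp_eq_zero_of_whiskerLeft_comp e h₁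
  exact ⟨_, t₂, (((Translate.refl s).whiskerLeft x').compIsoLeft u |>.whiskerRight _).trans
    (ht₁.trans ht₂), h₂⟩

end GradedComm2Ring

theorem IsHomMulSystem.hasLeftCalculusOfFractions {C : Type u} [Category.{v} C] [Preadditive C]
    [MonoidalCategory C] [SymmetricCategory C] [MonoidalPreadditive C] [GradedComm2Ring C]
    {S : MorphismProperty C} (hS : IsHomMulSystem S) :
    S.HasLeftCalculusOfFractions :=
  have : S.IsMultiplicative :=
    { id_mem X := hS.iso_mem _ inferInstance
      comp_mem f g hf hg := hS.comp_mem f g hf hg }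
  { exists_leftFraction X Y φ :=
      let ⟨_, t, f', hst, _, hsq⟩ := GradedComm2Ring.exists_translate_square φ.s φ.f
      ⟨⟨f', t, hS.translate_mem _ _ φ.hs hst⟩, hsq⟩
    ext X' X Y f₁ f₂ s hs heq := by
      obtain ⟨_, t, hst, h0⟩ := GradedComm2Ring.exists_translate_comp_eq_zero s (f₁ - f₂)
        (by rw [Preadditive.comp_sub, heq, sub_self])
      rw [Preadditive.sub_comp, sub_eq_zero] at h0
      exact ⟨_, t, hS.translate_mem _ _ hs hst, h0⟩ }

theorem exists_comp_map_eq_map {C : Type u} [Category.{v} C] {D : Type u'} [Category.{v'} D]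
    (S : MorphismProperty C) [S.HasLeftCalculusOfFractions] (L : C ⥤ D) [L.IsLocalization S]
    {a b : C} (φ : L.obj a ⟶ L.obj b) :
    ∃ (c : C) (r : a ⟶ c) (s : b ⟶ c), S s ∧ φ ≫ L.map s = L.map r := by
  obtain ⟨ψ, rfl⟩ := Localization.exists_leftFraction L S φ
  exact ⟨_, ψ.f, ψ.s, ψ.hs, ψ.map_comp_map_s L _⟩

namespace HomIdeal

open Functor.LaxMonoidal Functor.OplaxMonoidal

variable {C : Type u} [Category.{v} C] [Preadditive C] [MonoidalCategory C]
  {D : Type u'} [Category.{v'} D] (S : MorphismProperty C) (L : C ⥤ D)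

def fractions (I : HomIdeal C) (a b : C) : Set (L.obj a ⟶ L.obj b) :=
  {φ | ∃ (c : C) (r : a ⟶ c) (s : b ⟶ c), S s ∧ r ∈ I.carrier a c ∧ φ ≫ L.map s = L.map r}

/-- Objects of `D` are only isomorphic to objects `L.obj a`; testing against all maps to and from
such objects makes closure under composition automatic. -/
def localizedSet (I : HomIdeal C) (d e : D) : Set (d ⟶ e) :=
  {φ | ∀ (a b : C) (α : L.obj a ⟶ d) (β : e ⟶ L.obj b), α ≫ φ ≫ β ∈ I.fractions S L a b}

variable {S L} {I : HomIdeal C} {a b : C}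

theorem comp_mem_localizedSet {d d' e e' : D} (α : d' ⟶ d) {φ : d ⟶ e}
    (hφ : φ ∈ I.localizedSet S L d e) (β : e ⟶ e') : α ≫ φ ≫ β ∈ I.localizedSet S L d' e' :=
  fun a b α' β' => by simpa only [Category.assoc] using hφ a b (α' ≫ α) (β ≫ β')

section Additive

variable [Preadditive D] [L.Additive]

theorem zero_mem_fractions (hS : IsHomMulSystem S) :
    (0 : L.obj a ⟶ L.obj b) ∈ I.fractions S L a b :=
  ⟨b, 0, 𝟙 b, hS.iso_mem _ inferInstance, zero_mem _, by simp⟩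

theorem neg_mem_fractions {φ : L.obj a ⟶ L.obj b} (h : φ ∈ I.fractions S L a b) :
    -φ ∈ I.fractions S L a b :=
  let ⟨c, r, s, hs, hr, hφ⟩ := h
  ⟨c, -r, s, hs, neg_mem hr, by rw [Preadditive.neg_comp, hφ, L.map_neg]⟩

theorem add_mem_fractions [SymmetricCategory C] [MonoidalPreadditive C] [GradedComm2Ring C]
    (hS : IsHomMulSystem S) {φ₁ φ₂ : L.obj a ⟶ L.obj b}
    (h₁ : φ₁ ∈ I.fractions S L a b) (h₂ : φ₂ ∈ I.fractions S L a b) :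
    φ₁ + φ₂ ∈ I.fractions S L a b := by
  obtain ⟨c₁, r₁, s₁, hs₁, hr₁, hφ₁⟩ := h₁
  obtain ⟨c₂, r₂, s₂, hs₂, hr₂, hφ₂⟩ := h₂
  obtain ⟨m, t, s₂', hst, -, hsq⟩ := GradedComm2Ring.exists_translate_square s₁ s₂
  refine ⟨m, r₁ ≫ s₂' + r₂ ≫ t, s₂ ≫ t, hS.comp_mem _ _ hs₂ (hS.translate_mem _ _ hs₁ hst),
    add_mem (I.comp_left _ _ hr₁) (I.comp_left _ _ hr₂), ?_⟩
  rw [Preadditive.add_comp, L.map_add, L.map_comp, L.map_comp, L.map_comp, reassoc_of% hφ₂,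
    ← L.map_comp s₂, hsq, L.map_comp, reassoc_of% hφ₁]

end Additive

section Whisker

variable [MonoidalCategory D] [L.Monoidal]

theorem fractions_whiskerLeft (hS : IsHomMulSystem S) (c : C) {φ : L.obj a ⟶ L.obj b}
    (hφ : φ ∈ I.fractions S L a b) :
    δ L c a ≫ L.obj c ◁ φ ≫ μ L c b ∈ I.fractions S L (c ⊗ a) (c ⊗ b) := by
  obtain ⟨c₁, r, s, hs, hr, hφ⟩ := hφ
  refine ⟨c ⊗ c₁, c ◁ r, c ◁ s, hS.translate_mem _ _ hs (.whiskerLeft c (.refl s)),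
    by simpa using I.tensor_left (𝟙 c) _ hr, ?_⟩
  rw [Functor.Monoidal.map_whiskerLeft, Functor.Monoidal.map_whiskerLeft, Category.assoc,
    Category.assoc, Functor.Monoidal.μ_δ_assoc, ← MonoidalCategory.whiskerLeft_comp_assoc, hφ]

theorem fractions_whiskerRight (hS : IsHomMulSystem S) (c : C) {φ : L.obj a ⟶ L.obj b}
    (hφ : φ ∈ I.fractions S L a b) :
    δ L a c ≫ φ ▷ L.obj c ≫ μ L b c ∈ I.fractions S L (a ⊗ c) (b ⊗ c) := by
  obtain ⟨c₁, r, s, hs, hr, hφ⟩ := hφ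
  refine ⟨c₁ ⊗ c, r ▷ c, s ▷ c, hS.translate_mem _ _ hs (.whiskerRight c (.refl s)),
    by simpa using I.tensor_right _ (𝟙 c) hr, ?_⟩
  rw [Functor.Monoidal.map_whiskerRight, Functor.Monoidal.map_whiskerRight, Category.assoc,
    Category.assoc, Functor.Monoidal.μ_δ_assoc, ← MonoidalCategory.comp_whiskerRight_assoc, hφ]

end Whisker

section Localization

variable [SymmetricCategory C] [MonoidalPreadditive C] [GradedComm2Ring C] [L.IsLocalization S]

theorem fractions_comp_left (hS : IsHomMulSystem S) {b' : C} {φ : L.obj a ⟶ L.obj b}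
    (hφ : φ ∈ I.fractions S L a b) (χ : L.obj b ⟶ L.obj b') :
    φ ≫ χ ∈ I.fractions S L a b' := by
  have := hS.hasLeftCalculusOfFractions
  obtain ⟨c₁, r₁, s₁, hs₁, hr₁, hφ₁⟩ := hφ
  obtain ⟨c₂, r₂, s₂, hs₂, hχ⟩ := exists_comp_map_eq_map S L χ
  obtain ⟨m, t, r₂', hst, -, hsq⟩ := GradedComm2Ring.exists_translate_square s₁ r₂
  refine ⟨m, r₁ ≫ r₂', s₂ ≫ t, hS.comp_mem _ _ hs₂ (hS.translate_mem _ _ hs₁ hst),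
    I.comp_left _ _ hr₁, ?_⟩
  rw [L.map_comp, Category.assoc, reassoc_of% hχ, ← L.map_comp, hsq, L.map_comp,
    reassoc_of% hφ₁, L.map_comp]

theorem fractions_comp_right (hS : IsHomMulSystem S) {a' : C} (χ : L.obj a' ⟶ L.obj a)
    {φ : L.obj a ⟶ L.obj b} (hφ : φ ∈ I.fractions S L a b) :
    χ ≫ φ ∈ I.fractions S L a' b := by
  have := hS.hasLeftCalculusOfFractions
  obtain ⟨c₁, r₁, s₁, hs₁, hr₁, hφ₁⟩ := hφ
  obtain ⟨d, v, u, hu, hχ⟩ := exists_comp_map_eq_map S L χ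
  obtain ⟨m, t, r₁', hut, hrt, hsq⟩ := GradedComm2Ring.exists_translate_square u r₁
  refine ⟨m, v ≫ r₁', s₁ ≫ t, hS.comp_mem _ _ hs₁ (hS.translate_mem _ _ hu hut),
    I.comp_right _ _ (I.translate_mem hrt hr₁), ?_⟩
  rw [L.map_comp, Category.assoc, reassoc_of% hφ₁, ← L.map_comp, hsq, L.map_comp,
    reassoc_of% hχ, L.map_comp]

theorem mem_localizedSet_iff (hS : IsHomMulSystem S) (φ : L.obj a ⟶ L.obj b) :
    φ ∈ I.localizedSet S L (L.obj a) (L.obj b) ↔ φ ∈ I.fractions S L a b :=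
  ⟨fun h => by simpa using h a b (𝟙 _) (𝟙 _),
    fun h _ _ α β => fractions_comp_right hS α (fractions_comp_left hS h β)⟩

theorem mem_localizedSet_iff_of_iso (hS : IsHomMulSystem S) {d e : D} (α : L.obj a ≅ d)
    (β : L.obj b ≅ e) (φ : d ⟶ e) :
    φ ∈ I.localizedSet S L d e ↔ α.hom ≫ φ ≫ β.inv ∈ I.fractions S L a b :=
  ⟨fun h => h _ _ _ _, fun h => by
    simpa using comp_mem_localizedSet α.inv ((mem_localizedSet_iff hS _).2 h) β.hom⟩

theorem mem_of_map_mem_fractions (hS : IsHomMulSystem S) {p : HomIdeal C} (hp : p.IsPrime)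
    (hdisj : ∀ ⦃g h : C⦄ (f : g ⟶ h), S f → f ∉ p.carrier g h) {r : a ⟶ b}
    (h : L.map r ∈ p.fractions S L a b) : r ∈ p.carrier a b := by
  have := hS.hasLeftCalculusOfFractions
  obtain ⟨c, r', s, hs, hr', heq⟩ := h
  rw [← L.map_comp] at heq
  obtain ⟨z, w, hw, hcomp⟩ := (MorphismProperty.map_eq_iff_postcomp L S _ _).1 heq
  have hmem : r ≫ s ≫ w ∈ p.carrier a z := by
    rw [← Category.assoc, hcomp]
    exact p.comp_left _ w hr'
  exact (hp.mem_or_mem _ _ hmem).resolve_right (hdisj _ (hS.comp_mem _ _ hs hw))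

theorem fractions_mem_or_mem (hS : IsHomMulSystem S) {p : HomIdeal C} (hp : p.IsPrime)
    (hdisj : ∀ ⦃g h : C⦄ (f : g ⟶ h), S f → f ∉ p.carrier g h) {c : C}
    {φ : L.obj a ⟶ L.obj b} {ψ : L.obj b ⟶ L.obj c} (h : φ ≫ ψ ∈ p.fractions S L a c) :
    φ ∈ p.fractions S L a b ∨ ψ ∈ p.fractions S L b c := by
  have := hS.hasLeftCalculusOfFractions
  obtain ⟨c₁, r₁, s₁, hs₁, hφ⟩ := exists_comp_map_eq_map S L φ
  have : IsIso (L.map s₁) := Localization.inverts L S _ hs₁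
  obtain ⟨c₂, r₂, s₂, hs₂, hχ⟩ := exists_comp_map_eq_map S L (inv (L.map s₁) ≫ ψ)
  have hmap : (φ ≫ ψ) ≫ L.map s₂ = L.map (r₁ ≫ r₂) := by
    rw [L.map_comp, ← hχ, ← reassoc_of% hφ]
    simp
  have hr : r₁ ≫ r₂ ∈ p.carrier a c₂ :=
    mem_of_map_mem_fractions hS hp hdisj (hmap ▸ fractions_comp_left hS h _)
  refine (hp.mem_or_mem _ _ hr).imp (fun h₁ => ⟨c₁, r₁, s₁, hs₁, h₁, hφ⟩) (fun h₂ => ?_)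
  simpa using fractions_comp_right hS (L.map s₁) ⟨c₂, r₂, s₂, hs₂, h₂, hχ⟩

section Monoidal

variable [MonoidalCategory D] [L.Monoidal] [L.EssSurj]

theorem whiskerLeft_mem_localizedSet (hS : IsHomMulSystem S) (e' : D) {d e : D} {φ : d ⟶ e}
    (hφ : φ ∈ I.localizedSet S L d e) : e' ◁ φ ∈ I.localizedSet S L (e' ⊗ d) (e' ⊗ e) := by
  let κ := L.objObjPreimageIso e'
  let ιd := L.objObjPreimageIso d
  let ιe := L.objObjPreimageIso e
  refine (mem_localizedSet_iff_of_iso hS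
    ((Functor.Monoidal.μIso L _ _).symm ≪≫ whiskerRightIso κ _ ≪≫ whiskerLeftIso _ ιd)
    ((Functor.Monoidal.μIso L _ _).symm ≪≫ whiskerRightIso κ _ ≪≫ whiskerLeftIso _ ιe) _).2 ?_
  convert fractions_whiskerLeft hS (L.objPreimage e') (hφ _ _ ιd.hom ιe.inv) using 1
  simp [whisker_exchange_assoc]

theorem whiskerRight_mem_localizedSet (hS : IsHomMulSystem S) (e' : D) {d e : D} {φ : d ⟶ e}
    (hφ : φ ∈ I.localizedSet S L d e) : φ ▷ e' ∈ I.localizedSet S L (d ⊗ e') (e ⊗ e') := by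
  let κ := L.objObjPreimageIso e'
  let ιd := L.objObjPreimageIso d
  let ιe := L.objObjPreimageIso e
  refine (mem_localizedSet_iff_of_iso hS
    ((Functor.Monoidal.μIso L _ _).symm ≪≫ whiskerLeftIso _ κ ≪≫ whiskerRightIso ιd _)
    ((Functor.Monoidal.μIso L _ _).symm ≪≫ whiskerLeftIso _ κ ≪≫ whiskerRightIso ιe _) _).2 ?_
  convert fractions_whiskerRight hS (L.objPreimage e') (hφ _ _ ιd.hom ιe.inv) using 1
  simp [← whisker_exchange_assoc]

variable [Preadditive D] [L.Additive]

variable (L I) in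
def localized (hS : IsHomMulSystem S) : HomIdeal D where
  carrier d e :=
    { carrier := I.localizedSet S L d e
      zero_mem' _ _ _ _ := by simpa using zero_mem_fractions hS
      add_mem' h₁ h₂ _ _ _ _ := by
        simpa using add_mem_fractions hS (h₁ _ _ _ _) (h₂ _ _ _ _)
      neg_mem' h _ _ _ _ := by simpa using neg_mem_fractions (h _ _ _ _) }
  comp_left r s hr := by
    change r ≫ s ∈ I.localizedSet S L _ _
    simpa using comp_mem_localizedSet (𝟙 _) hr s
  comp_right t r hr := by
    change t ≫ r ∈ I.localizedSet S L _ _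
    simpa using comp_mem_localizedSet t hr (𝟙 _)
  tensor_left s r hr := by
    change s ⊗ₘ r ∈ I.localizedSet S L _ _
    simpa [MonoidalCategory.tensorHom_def] using
      comp_mem_localizedSet (s ▷ _) (whiskerLeft_mem_localizedSet hS _ hr) (𝟙 _)
  tensor_right r s hr := by
    change r ⊗ₘ s ∈ I.localizedSet S L _ _
    simpa [MonoidalCategory.tensorHom_def'] using
      comp_mem_localizedSet (_ ◁ s) (whiskerRight_mem_localizedSet hS _ hr) (𝟙 _)

theorem isPrime_localized (hS : IsHomMulSystem S) {p : HomIdeal C} (hp : p.IsPrime)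
    (hdisj : ∀ ⦃g h : C⦄ (f : g ⟶ h), S f → f ∉ p.carrier g h) :
    (p.localized L hS).IsPrime where
  isProper d hd := by
    have := (mem_localizedSet_iff_of_iso hS (L.objObjPreimageIso d) (L.objObjPreimageIso d)
      (𝟙 d)).1 hd
    rw [Category.id_comp, Iso.hom_inv_id, ← L.map_id] at this
    exact hp.isProper _ (mem_of_map_mem_fractions hS hp hdisj this)
  mem_or_mem {g h l} r s hrs := by
    let ιg := L.objObjPreimageIso g
    let ιh := L.objObjPreimageIso h
    let ιl := L.objObjPreimageIso l
    have : (ιg.hom ≫ r ≫ ιh.inv) ≫ ιh.hom ≫ s ≫ ιl.inv ∈ p.fractions S L _ _ := by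
      simpa using (mem_localizedSet_iff_of_iso hS ιg ιl (r ≫ s)).1 hrs
    exact (fractions_mem_or_mem hS hp hdisj this).imp
      (mem_localizedSet_iff_of_iso hS ιg ιh r).2 (mem_localizedSet_iff_of_iso hS ιh ιl s).2

end Monoidal

end Localization

end HomIdeal

theorem HomIdeal.mem_iff_exists_map_mem {C : Type u} [Category.{v} C] {D : Type u'}
    [Category.{v'} D] [Preadditive D] [MonoidalCategory D] (S : MorphismProperty C)
    [S.HasLeftCalculusOfFractions] (L : C ⥤ D) [L.IsLocalization S] (J : HomIdeal D) {a b : C}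
    (φ : L.obj a ⟶ L.obj b) :
    φ ∈ J.carrier (L.obj a) (L.obj b) ↔
      ∃ (c : C) (r : a ⟶ c) (s : b ⟶ c),
        S s ∧ L.map r ∈ J.carrier (L.obj a) (L.obj c) ∧ φ ≫ L.map s = L.map r := by
  constructor
  · intro hφ
    obtain ⟨c, r, s, hs, heq⟩ := exists_comp_map_eq_map S L φ
    exact ⟨c, r, s, hs, heq ▸ J.comp_left _ _ hφ, heq⟩
  · rintro ⟨c, r, s, hs, hr, heq⟩
    have : IsIso (L.map s) := Localization.inverts L S _ hs
    simpa [← heq] using J.comp_left _ (inv (L.map s)) hr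

theorem fraction_ideals_of_localization_general
    {C : Type u} [Category.{v} C] [Preadditive C] [MonoidalCategory C]
    [SymmetricCategory C] [MonoidalPreadditive C] [GradedComm2Ring C]
    {D : Type u'} [Category.{v'} D] [Preadditive D] [MonoidalCategory D]
    (S : MorphismProperty C) (hS : IsHomMulSystem S)
    (L : C ⥤ D) [L.Additive] [L.Monoidal] [L.IsLocalization S] :
    (∀ p : HomIdeal C, p.IsPrime →
      (∀ ⦃g h : C⦄ (f : g ⟶ h), S f → f ∉ p.carrier g h) →
      ∃ q : HomIdeal D, q.IsPrime ∧
        ∀ (a b : C) (φ : L.obj a ⟶ L.obj b),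
          φ ∈ q.carrier (L.obj a) (L.obj b) ↔
            ∃ (c : C) (r : a ⟶ c) (s : b ⟶ c),
              S s ∧ r ∈ p.carrier a c ∧ φ ≫ L.map s = L.map r) ∧
    (∀ I : HomIdeal C,
      ∃ q : HomIdeal D,
        ∀ (a b : C) (φ : L.obj a ⟶ L.obj b),
          φ ∈ q.carrier (L.obj a) (L.obj b) ↔
            ∃ (c : C) (r : a ⟶ c) (s : b ⟶ c),
              S s ∧ r ∈ I.carrier a c ∧ φ ≫ L.map s = L.map r) ∧
    (∀ (J : HomIdeal D) (a b : C) (φ : L.obj a ⟶ L.obj b),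
      φ ∈ J.carrier (L.obj a) (L.obj b) ↔
        ∃ (c : C) (r : a ⟶ c) (s : b ⟶ c),
          S s ∧ L.map r ∈ J.carrier (L.obj a) (L.obj c) ∧ φ ≫ L.map s = L.map r) := by
  have := hS.hasLeftCalculusOfFractions
  have := Localization.essSurj L S
  exact ⟨fun p hp hdisj => ⟨p.localized L hS, HomIdeal.isPrime_localized hS hp hdisj,
      fun _ _ φ => HomIdeal.mem_localizedSet_iff hS φ⟩,
    fun I => ⟨I.localized L hS, fun _ _ φ => HomIdeal.mem_localizedSet_iff hS φ⟩,
    fun J _ _ φ => J.mem_iff_exists_map_mem S L φ⟩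

/-- **Statement 15.** Let `S` be a homogeneous multiplicative system in a graded
commutative 2-ring `C`, with localization `L : C ⥤ D` (`D = S⁻¹C`, again a graded
commutative 2-ring).  For a homogeneous ideal `I` of `C`, the collection
`S⁻¹I = {s⁻¹ ∘ r : s ∈ S, r ∈ I}` of left fractions (morphisms `φ : L(a) ⟶ L(b)` with
`φ ∘ L(s) ⁻¹... i.e. φ ≫ L(s) = L(r)` for some `r ∈ I`, `s ∈ S`) is a homogeneous
ideal of `D`; if `p` is prime with `p ∩ S = ∅` then `S⁻¹p` is a prime homogeneous
ideal; and every homogeneous ideal `J` of `D` satisfies `J = S⁻¹(loc⁻¹ J)`. -/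
theorem fraction_ideals_of_localization
    {C : Type u} [Category.{v} C] [Preadditive C] [MonoidalCategory C]
    [SymmetricCategory C] [MonoidalPreadditive C] [GradedComm2Ring C]
    {D : Type u'} [Category.{v'} D] [Preadditive D] [MonoidalCategory D]
    [SymmetricCategory D] [MonoidalPreadditive D] [GradedComm2Ring D]
    (S : MorphismProperty C) (hS : IsHomMulSystem S)
    (L : C ⥤ D) [L.Additive] [L.Monoidal] [L.Braided] [L.IsLocalization S] :
    (∀ p : HomIdeal C, p.IsPrime →
      (∀ ⦃g h : C⦄ (f : g ⟶ h), S f → f ∉ p.carrier g h) →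
      ∃ q : HomIdeal D, q.IsPrime ∧
        ∀ (a b : C) (φ : L.obj a ⟶ L.obj b),
          φ ∈ q.carrier (L.obj a) (L.obj b) ↔
            ∃ (c : C) (r : a ⟶ c) (s : b ⟶ c),
              S s ∧ r ∈ p.carrier a c ∧ φ ≫ L.map s = L.map r) ∧
    (∀ I : HomIdeal C,
      ∃ q : HomIdeal D,
        ∀ (a b : C) (φ : L.obj a ⟶ L.obj b),
          φ ∈ q.carrier (L.obj a) (L.obj b) ↔
            ∃ (c : C) (r : a ⟶ c) (s : b ⟶ c),
              S s ∧ r ∈ I.carrier a c ∧ φ ≫ L.map s = L.map r) ∧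
    (∀ (J : HomIdeal D) (a b : C) (φ : L.obj a ⟶ L.obj b),
      φ ∈ J.carrier (L.obj a) (L.obj b) ↔
        ∃ (c : C) (r : a ⟶ c) (s : b ⟶ c),
          S s ∧ L.map r ∈ J.carrier (L.obj a) (L.obj c) ∧ φ ≫ L.map s = L.map r) :=
  fraction_ideals_of_localization_general S hS L
end

section
/- Let A be an essentially small preadditive symmetric monoidal category whose tensor product is additive in each variable, let R be a full replete tensor subcategory of A all of whose objects are invertible in A (so that R is a graded commutative 2-ring), and let S be a homogeneous multiplicative system in R. Let S_A be the smallest class of morphisms of A containing S and all isomorphisms of A and closed under composition and under tensoring with identity morphisms of objects of A. If s : x → y is a morphism in S_A such that x belongs to R or y belongs to R, then both x and y belong to R and s belongs to S. -/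
open CategoryTheory CategoryTheory.Limits CategoryTheory.MonoidalCategory

universe w v u v' u' v'' u''

section
variable {A : Type u} [Category.{v} A] [MonoidalCategory A]

/-- Translates inside the full replete subcategory with class of objects `P`:
obtained by a finite sequence of tensoring with identities of objects satisfying `P`
and composing with isomorphisms between objects satisfying `P`. -/
inductive TranslateIn (P : A → Prop) : ∀ {g h g' h' : A}, (g ⟶ h) → (g' ⟶ h') → Prop
  | refl {g h : A} (r : g ⟶ h) : TranslateIn P r r
  | whiskerLeft {g h g' h' : A} {r : g ⟶ h} {r' : g' ⟶ h'} (l : A) :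
      P l → TranslateIn P r r' → TranslateIn P r (l ◁ r')
  | whiskerRight {g h g' h' : A} {r : g ⟶ h} {r' : g' ⟶ h'} (l : A) :
      P l → TranslateIn P r r' → TranslateIn P r (r' ▷ l)
  | compIsoLeft {g h g' h' h'' : A} {r : g ⟶ h} {r' : g' ⟶ h'} (u : h' ≅ h'') :
      P h'' → TranslateIn P r r' → TranslateIn P r (r' ≫ u.hom)
  | compIsoRight {g h g' h' g'' : A} {r : g ⟶ h} {r' : g' ⟶ h'} (u : g'' ≅ g') :
      P g'' → TranslateIn P r r' → TranslateIn P r (u.hom ≫ r')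

/-- The smallest class of morphisms of `A` containing `S` and all isomorphisms of `A`
and closed under composition and under tensoring with identity morphisms of objects
of `A`. -/
inductive ExtMemId (S : MorphismProperty A) : ∀ {x y : A}, (x ⟶ y) → Prop
  | of {x y : A} (s : x ⟶ y) : S s → ExtMemId S s
  | iso {x y : A} (f : x ⟶ y) : IsIso f → ExtMemId S f
  | comp {x y z : A} (f : x ⟶ y) (g : y ⟶ z) :
      ExtMemId S f → ExtMemId S g → ExtMemId S (f ≫ g)
  | whiskerLeft {x y : A} (z : A) (f : x ⟶ y) : ExtMemId S f → ExtMemId S (z ◁ f)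
  | whiskerRight {x y : A} (z : A) (f : x ⟶ y) : ExtMemId S f → ExtMemId S (f ▷ z)

end

/-- **Statement 17.** Let `A` be an essentially small preadditive symmetric monoidal
category with tensor additive in each variable, let `R` be a full replete tensor
subcategory (with class of objects `P`) all of whose objects are invertible in `A`,
and let `S` be a homogeneous multiplicative system in `R`.  If `s : x ⟶ y` belongs to
the extension `S_A` of `S` to `A` and `x` or `y` belongs to `R`, then both `x` and `y`
belong to `R` and `s` belongs to `S`. -/
theorem extSystem_mem_of_endpoint_in_subcategory
    {A : Type u} [Category.{v} A] [Preadditive A] [MonoidalCategory A]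
    [SymmetricCategory A] [MonoidalPreadditive A] [EssentiallySmall.{v} A]
    (P : A → Prop)
    (hrep : ∀ {x y : A}, P x → (x ≅ y) → P y)
    (hunit : P (𝟙_ A))
    (htensor : ∀ {x y : A}, P x → P y → P (x ⊗ y))
    (hinv : ∀ x : A, P x → ∃ y : A, P y ∧ Nonempty (x ⊗ y ≅ 𝟙_ A))
    (S : MorphismProperty A)
    (hS_obj : ∀ {x y : A} (f : x ⟶ y), S f → P x ∧ P y)
    (hS_iso : ∀ {x y : A} (f : x ⟶ y), P x → P y → IsIso f → S f)
    (hS_comp : ∀ {x y z : A} (f : x ⟶ y) (g : y ⟶ z), S f → S g → S (f ≫ g))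
    (hS_translate : ∀ {x y x' y' : A} (f : x ⟶ y) (f' : x' ⟶ y'),
      S f → TranslateIn P f f' → S f')
    {x y : A} (s : x ⟶ y) (hs : ExtMemId S s) (hxy : P x ∨ P y) :
    P x ∧ P y ∧ S s := by
  -- Transfer lemma: if `x` is `P`-invertible, `b ∈ P` and `u ⊗ x ∈ P`, then `u ⊗ b ∈ P`.
  have transfer : ∀ {xx xx' b : A} (u : A), P xx' → (xx ⊗ xx' ≅ 𝟙_ A) → P b →
      P (u ⊗ xx) → P (u ⊗ b) := by
    intro xx xx' b u hx' e hb hux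
    refine hrep (htensor hux (htensor hx' hb)) ?_
    exact (α_ u xx (xx' ⊗ b)) ≪≫ whiskerLeftIso u
      ((α_ xx xx' b).symm ≪≫ (whiskerRightIso e b) ≪≫ λ_ b)
  suffices Q : ∀ {x y : A} (s : x ⟶ y), ExtMemId S s → ∀ u : A,
      (P (u ⊗ x) ∨ P (u ⊗ y)) → P (u ⊗ x) ∧ P (u ⊗ y) ∧ S (u ◁ s) by
    have hux : P (𝟙_ A ⊗ x) ∨ P (𝟙_ A ⊗ y) := by
      rcases hxy with h | h
      · exact Or.inl (hrep h (λ_ x).symm)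
      · exact Or.inr (hrep h (λ_ y).symm)
    obtain ⟨h1, h2, h3⟩ := Q s hs (𝟙_ A) hux
    have hx : P x := hrep h1 (λ_ x)
    have hy : P y := hrep h2 (λ_ y)
    refine ⟨hx, hy, ?_⟩
    have heq : s = (λ_ x).inv ≫ ((𝟙_ A ◁ s) ≫ (λ_ y).hom) := by simp
    rw [heq]
    exact hS_translate _ _ h3
      (TranslateIn.compIsoRight (λ_ x).symm hx
        (TranslateIn.compIsoLeft (λ_ y) hy (TranslateIn.refl _)))
  clear hs hxy s x y
  intro x y s hs
  induction hs with
  | @of x y s hSs =>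
    obtain ⟨hx, hy⟩ := hS_obj s hSs
    obtain ⟨x', hx', ⟨e⟩⟩ := hinv _ hx
    obtain ⟨y', hy', ⟨e'⟩⟩ := hinv _ hy
    intro u hu
    have hux : P (u ⊗ x) := by
      rcases hu with h | h
      · exact h
      · exact transfer u hy' e' hx h
    have huy : P (u ⊗ y) := transfer u hx' e hy hux
    refine ⟨hux, huy, ?_⟩
    have hcP : P ((u ⊗ x) ⊗ x') := htensor hux hx'
    let F : ∀ z : A, (((u ⊗ x) ⊗ x') ⊗ z ≅ u ⊗ z) := fun z =>
      (α_ (u ⊗ x) x' z) ≪≫ (α_ u x (x' ⊗ z)) ≪≫ whiskerLeftIso u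
        ((α_ x x' z).symm ≪≫ (whiskerRightIso e z) ≪≫ λ_ z)
    have hnat : (F x).hom ≫ (u ◁ s) = (((u ⊗ x) ⊗ x') ◁ s) ≫ (F y).hom := by
      simp only [F, Iso.trans_hom, Iso.symm_hom, whiskerLeftIso_hom, whiskerRightIso_hom,
        Category.assoc]
      rw [associator_naturality_right_assoc, associator_naturality_right_assoc]
      simp only [← MonoidalCategory.whiskerLeft_comp]
      rw [associator_inv_naturality_right_assoc, whisker_exchange_assoc,
        MonoidalCategory.leftUnitor_naturality]
      simp only [Category.assoc]
    have heq : u ◁ s = (F x).inv ≫ ((((u ⊗ x) ⊗ x') ◁ s) ≫ (F y).hom) := by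
      rw [← hnat, Iso.inv_hom_id_assoc]
    rw [heq]
    have hs1 : S (((u ⊗ x) ⊗ x') ◁ s) :=
      hS_translate s _ hSs (TranslateIn.whiskerLeft _ hcP (TranslateIn.refl s))
    exact hS_translate _ _ hs1
      (TranslateIn.compIsoRight (F x).symm hux
        (TranslateIn.compIsoLeft (F y) huy (TranslateIn.refl _)))
  | @iso x y f hf =>
    intro u hu
    haveI := hf
    have hI : IsIso (u ◁ f) := (whiskerLeftIso u (asIso f)).isIso_hom
    have hux : P (u ⊗ x) ∧ P (u ⊗ y) := by
      rcases hu with h | h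
      · exact ⟨h, hrep h (whiskerLeftIso u (asIso f))⟩
      · exact ⟨hrep h (whiskerLeftIso u (asIso f)).symm, h⟩
    exact ⟨hux.1, hux.2, hS_iso _ hux.1 hux.2 hI⟩
  | @comp x y z f g hf hg ihf ihg =>
    intro u hu
    have key : P (u ⊗ x) ∧ P (u ⊗ y) ∧ P (u ⊗ z) ∧ S (u ◁ f) ∧ S (u ◁ g) := by
      rcases hu with h | h
      · obtain ⟨h1, h2, hSf⟩ := ihf u (Or.inl h)
        obtain ⟨_, h3, hSg⟩ := ihg u (Or.inl h2)
        exact ⟨h1, h2, h3, hSf, hSg⟩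
      · obtain ⟨h2, h3, hSg⟩ := ihg u (Or.inr h)
        obtain ⟨h1, _, hSf⟩ := ihf u (Or.inr h2)
        exact ⟨h1, h2, h3, hSf, hSg⟩
    obtain ⟨h1, h2, h3, hSf, hSg⟩ := key
    refine ⟨h1, h3, ?_⟩
    rw [MonoidalCategory.whiskerLeft_comp]
    exact hS_comp _ _ hSf hSg
  | @whiskerLeft x y z f hf ih =>
    intro u hu
    have hu' : P ((u ⊗ z) ⊗ x) ∨ P ((u ⊗ z) ⊗ y) := by
      rcases hu with h | h
      · exact Or.inl (hrep h (α_ u z x).symm)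
      · exact Or.inr (hrep h (α_ u z y).symm)
    obtain ⟨h1, h2, hSf⟩ := ih (u ⊗ z) hu'
    refine ⟨hrep h1 (α_ u z x), hrep h2 (α_ u z y), ?_⟩
    have heq : u ◁ (z ◁ f) = (α_ u z x).inv ≫ ((((u ⊗ z)) ◁ f) ≫ (α_ u z y).hom) := by
      monoidal
    rw [heq]
    exact hS_translate _ _ hSf
      (TranslateIn.compIsoRight (α_ u z x).symm (hrep h1 (α_ u z x))
        (TranslateIn.compIsoLeft (α_ u z y) (hrep h2 (α_ u z y)) (TranslateIn.refl _)))
  | @whiskerRight x y z f hf ih =>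
    intro u hu
    let G : ∀ z' : A, ((u ⊗ z) ⊗ z' ≅ u ⊗ (z' ⊗ z)) := fun z' =>
      (α_ u z z') ≪≫ whiskerLeftIso u (β_ z z')
    have hu' : P ((u ⊗ z) ⊗ x) ∨ P ((u ⊗ z) ⊗ y) := by
      rcases hu with h | h
      · exact Or.inl (hrep h (G x).symm)
      · exact Or.inr (hrep h (G y).symm)
    obtain ⟨h1, h2, hSf⟩ := ih (u ⊗ z) hu'
    refine ⟨hrep h1 (G x), hrep h2 (G y), ?_⟩
    have hnat : (G x).hom ≫ (u ◁ (f ▷ z)) = (((u ⊗ z)) ◁ f) ≫ (G y).hom := by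
      simp only [G, Iso.trans_hom, whiskerLeftIso_hom, Category.assoc]
      rw [associator_naturality_right_assoc]
      simp only [← MonoidalCategory.whiskerLeft_comp]
      rw [BraidedCategory.braiding_naturality_right]
    have heq : u ◁ (f ▷ z) = (G x).inv ≫ ((((u ⊗ z)) ◁ f) ≫ (G y).hom) := by
      rw [← hnat, Iso.inv_hom_id_assoc]
    rw [heq]
    exact hS_translate _ _ hSf
      (TranslateIn.compIsoRight (G x).symm (hrep h1 (G x))
        (TranslateIn.compIsoLeft (G y) (hrep h2 (G y)) (TranslateIn.refl _)))
end
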